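/- arXiv:2112.00631 — 10 statements merged into one kernel-verified Lean document; each statement's English description precedes it below -/
import Mathlib

section
/- Let k and d be positive integers with k ≥ d+2. If G is a d-degenerate graph, then the k-recolouring graph of G is connected; that is, any proper k-colouring of G can be transformed into any other by a sequence of single-vertex recolourings, each intermediate colouring being proper. -/
/-- A proper `k`-colouring of a simple graph. -/
def Proper {V : Type*} (G : SimpleGraph V) {k : ℕ} (c : V → Fin k) : Prop :=
  ∀ ⦃u w⦄, G.Adj u w → c u ≠ c w

/-- One single-vertex recolouring step between proper `k`-colourings:
both are proper and they differ on exactly one vertex. -/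
def Step {V : Type*} (G : SimpleGraph V) {k : ℕ} (c c' : V → Fin k) : Prop :=
  Proper G c ∧ Proper G c' ∧ ∃! x, c x ≠ c' x

/-- Reachability in the `k`-recolouring graph of `G`. -/
def Reach {V : Type*} (G : SimpleGraph V) {k : ℕ} (c c' : V → Fin k) : Prop :=
  Relation.ReflTransGen (Step G) c c'

/-- `G` is `d`-degenerate: every (induced) subgraph, given by a nonempty finite set of
vertices, contains a vertex with at most `d` neighbours inside that set. -/
def Degenerate {V : Type*} (G : SimpleGraph V) (d : ℕ) : Prop :=
  ∀ s : Finset V, s.Nonempty → ∃ v ∈ s, ((s : Set V) ∩ G.neighborSet v).ncard ≤ d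

open Classical in
/-- Extension of a colouring of `V \ {v}` by colouring `v` with `a`. -/
noncomputable def extCol {V : Type*} {k : ℕ} (v : V)
    (c : {x : V // x ≠ v} → Fin k) (a : Fin k) : V → Fin k :=
  fun w => if h : w = v then a else c ⟨w, h⟩

lemma extCol_v {V : Type*} {k : ℕ} (v : V) (c : {x : V // x ≠ v} → Fin k) (a : Fin k) :
    extCol v c a v = a := by simp [extCol]

lemma extCol_ne {V : Type*} {k : ℕ} (v : V) (c : {x : V // x ≠ v} → Fin k) (a : Fin k)
    {w : V} (h : w ≠ v) : extCol v c a w = c ⟨w, h⟩ := by simp [extCol, h]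

lemma properExt {V : Type*} {k : ℕ} (G : SimpleGraph V) (v : V)
    (c : {x : V // x ≠ v} → Fin k) (a : Fin k)
    (hc : Proper (G.comap (Subtype.val : {x : V // x ≠ v} → V)) c)
    (ha : ∀ w : {x : V // x ≠ v}, G.Adj v w.1 → a ≠ c w) :
    Proper G (extCol v c a) := by
  intro u w huw
  by_cases hu : u = v
  · subst hu
    have hwv : w ≠ u := fun h => G.irrefl (h ▸ huw)
    rw [extCol_v, extCol_ne u c a hwv]
    exact ha ⟨w, hwv⟩ huw
  · by_cases hw : w = v
    · subst hw
      rw [extCol_v, extCol_ne w c a hu]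
      exact Ne.symm (ha ⟨u, hu⟩ huw.symm)
    · rw [extCol_ne v c a hu, extCol_ne v c a hw]
      exact hc (huw : (G.comap (Subtype.val : {x : V // x ≠ v} → V)).Adj ⟨u, hu⟩ ⟨w, hw⟩)

/-- The key induction on the number of vertices. -/
lemma key {k d : ℕ} (hk : d + 2 ≤ k) :
    ∀ n : ℕ, ∀ (V : Type u) [Fintype V] (G : SimpleGraph V),
      Fintype.card V ≤ n → Degenerate G d →
      ∀ α β : V → Fin k, Proper G α → Proper G β → Reach G α β := by
  intro n
  induction n with
  | zero =>
    intro V _ G hcard _ α β _ _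
    have : IsEmpty V := Fintype.card_eq_zero_iff.mp (Nat.le_zero.mp hcard)
    have : α = β := funext fun x => (this.false x).elim
    exact this ▸ Relation.ReflTransGen.refl
  | succ n ih =>
    intro V _ G hcard hdeg α β hα hβ
    classical
    by_cases hV : IsEmpty V
    · have : α = β := funext fun x => (hV.false x).elim
      exact this ▸ Relation.ReflTransGen.refl
    · rw [not_isEmpty_iff] at hV
      obtain ⟨v, -, hv⟩ := hdeg Finset.univ Finset.univ_nonempty
      have hNv : (G.neighborSet v).ncard ≤ d := by
        simpa using hv
      let V' := {x : V // x ≠ v}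
      let G' : SimpleGraph V' := G.comap Subtype.val
      have hcard' : Fintype.card V' ≤ n := by
        have hlt : Fintype.card V' < Fintype.card V :=
          Fintype.card_subtype_lt (p := fun x => x ≠ v) (x := v) (by simp)
        omega
      -- degeneracy of G'
      have hdeg' : Degenerate G' d := by
        intro s' hs'
        obtain ⟨w, hws, hw⟩ := hdeg (s'.image Subtype.val) (hs'.image _)
        obtain ⟨w', hw's, rfl⟩ := Finset.mem_image.mp hws
        refine ⟨w', hw's, ?_⟩
        have hsub : (Subtype.val : V' → V) '' ((s' : Set V') ∩ G'.neighborSet w') ⊆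
            ((s'.image Subtype.val : Finset V) : Set V) ∩ G.neighborSet w'.1 := by
          rintro x ⟨y, ⟨hy1, hy2⟩, rfl⟩
          exact ⟨Finset.mem_coe.mpr (Finset.mem_image.mpr ⟨y, hy1, rfl⟩), hy2⟩
        calc ((s' : Set V') ∩ G'.neighborSet w').ncard
            = ((Subtype.val : V' → V) '' ((s' : Set V') ∩ G'.neighborSet w')).ncard :=
              (Set.ncard_image_of_injective _ Subtype.val_injective).symm
          _ ≤ _ := Set.ncard_le_ncard hsub (Set.toFinite _)
          _ ≤ d := hw
      have hprop' : ∀ c : V → Fin k, Proper G c →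
          Proper G' (fun x : V' => c x.1) := by
        intro c hc u w huw
        exact hc huw
      -- the lifting lemma
      have main : ∀ c' : V' → Fin k, Relation.ReflTransGen (Step G')
          (fun x : V' => α x.1) c' →
          ∀ a : Fin k, Proper G (extCol v c' a) → Reach G α (extCol v c' a) := by
        intro c' hpath
        induction hpath with
        | refl =>
          intro a hane
          by_cases hav : a = α v
          · have : extCol v (fun x : V' => α x.1) a = α := by
              funext w
              by_cases hw : w = v
              · subst hw; rw [extCol_v, hav]
              · rw [extCol_ne _ _ _ hw]
            rw [this]
            exact Relation.ReflTransGen.refl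
          · refine Relation.ReflTransGen.single ⟨hα, hane, v, ?_, ?_⟩
            · show α v ≠ extCol v (fun x : V' => α x.1) a v
              rw [extCol_v]; exact fun h => hav h.symm
            · intro y hy
              by_contra hyv
              exact hy ((extCol_ne v (fun x : V' => α x.1) a hyv).symm)
        | @tail c' c'' hpath hstep ihm =>
          intro b hb
          obtain ⟨hc', hc'', u, hu, huuniq⟩ := hstep
          -- pick colour a for v avoiding c'' on neighbours and c' u
          have hex : ∃ a : Fin k, a ∉ (c'' '' {w : V' | G.Adj v w.1} ∪ {c' u}) := by
            set S : Set (Fin k) := c'' '' {w : V' | G.Adj v w.1} ∪ {c' u} with hS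
            have h1 : ({w : V' | G.Adj v w.1}).ncard ≤ d := by
              have hsub : (Subtype.val : V' → V) '' {w : V' | G.Adj v w.1} ⊆
                  G.neighborSet v := by rintro x ⟨y, hy, rfl⟩; exact hy
              calc ({w : V' | G.Adj v w.1}).ncard
                  = ((Subtype.val : V' → V) '' {w : V' | G.Adj v w.1}).ncard :=
                    (Set.ncard_image_of_injective _ Subtype.val_injective).symm
                _ ≤ (G.neighborSet v).ncard := Set.ncard_le_ncard hsub (Set.toFinite _)
                _ ≤ d := hNv
            have h2 : S.ncard ≤ d + 1 := by
              calc S.ncard ≤ (c'' '' {w : V' | G.Adj v w.1}).ncard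
                    + ({c' u} : Set (Fin k)).ncard := Set.ncard_union_le _ _
                _ ≤ ({w : V' | G.Adj v w.1}).ncard + 1 := by
                    have := Set.ncard_image_le (f := c'') (s := {w : V' | G.Adj v w.1})
                      (Set.toFinite _)
                    simp only [Set.ncard_singleton]
                    omega
                _ ≤ d + 1 := by omega
            have hSne : S ≠ Set.univ := by
              intro h
              rw [h, Set.ncard_univ, Nat.card_eq_fintype_card, Fintype.card_fin] at h2
              omega
            exact (Set.ne_univ_iff_exists_notMem S).mp hSne
          obtain ⟨a, ha⟩ := hex
          have haN : ∀ w : V', G.Adj v w.1 → a ≠ c'' w := by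
            intro w hw h
            exact ha (Set.mem_union_left _ ⟨w, hw, h.symm⟩)
          have hau : a ≠ c' u := fun h => ha (Set.mem_union_right _ h)
          have haN' : ∀ w : V', G.Adj v w.1 → a ≠ c' w := by
            intro w hw
            by_cases hwu : w = u
            · subst hwu; exact hau
            · have heq : c' w = c'' w := by
                by_contra h
                exact hwu (huuniq w h)
              rw [heq]; exact haN w hw
          have hp1 : Proper G (extCol v c' a) := properExt G v c' a hc' haN'
          have hp2 : Proper G (extCol v c'' a) := properExt G v c'' a hc'' haN
          have r1 : Reach G α (extCol v c' a) := ihm a hp1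
          have s1 : Step G (extCol v c' a) (extCol v c'' a) := by
            refine ⟨hp1, hp2, u.1, ?_, ?_⟩
            · show extCol v c' a u.1 ≠ extCol v c'' a u.1
              rw [extCol_ne _ _ _ u.2, extCol_ne _ _ _ u.2]
              exact hu
            · intro y hy
              by_cases hyv : y = v
              · subst hyv
                exfalso
                apply hy
                rw [extCol_v, extCol_v]
              · have hy' : extCol v c' a y ≠ extCol v c'' a y := hy
                rw [extCol_ne _ _ _ hyv, extCol_ne _ _ _ hyv] at hy'
                exact congrArg Subtype.val (huuniq ⟨y, hyv⟩ hy')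
          by_cases hab : a = b
          · subst hab
            exact r1.tail s1
          · have s2 : Step G (extCol v c'' a) (extCol v c'' b) := by
              refine ⟨hp2, hb, v, ?_, ?_⟩
              · show extCol v c'' a v ≠ extCol v c'' b v
                rw [extCol_v, extCol_v]; exact hab
              · intro y hy
                by_contra hyv
                have hy' : extCol v c'' a y ≠ extCol v c'' b y := hy
                rw [extCol_ne _ _ _ hyv, extCol_ne _ _ _ hyv] at hy'
                exact hy' rfl
            exact (r1.tail s1).tail s2
      -- conclude
      have hpathβ : Relation.ReflTransGen (Step G') (fun x : V' => α x.1)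
          (fun x : V' => β x.1) :=
        ih V' G' hcard' hdeg' _ _ (hprop' α hα) (hprop' β hβ)
      have hβext : extCol v (fun x : V' => β x.1) (β v) = β := by
        funext w
        by_cases hw : w = v
        · subst hw; rw [extCol_v]
        · rw [extCol_ne _ _ _ hw]
      have := main (fun x : V' => β x.1) hpathβ (β v) (by rw [hβext]; exact hβ)
      rwa [hβext] at this

/-- Dyer et al.: for `k ≥ d + 2`, the `k`-recolouring graph of a `d`-degenerate graph
is connected. -/
theorem stmt0 {V : Type*} [Fintype V] (G : SimpleGraph V) (k d : ℕ)
    (hdpos : 0 < d) (hkpos : 0 < k) (hk : d + 2 ≤ k) (hdeg : Degenerate G d)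
    (α β : V → Fin k) (hα : Proper G α) (hβ : Proper G β) :
    Reach G α β := by
  exact key hk (Fintype.card V) V G le_rfl hdeg α β hα hβ
end

section
/- Let G be a graph, v a vertex of G, and k ≥ deg(v)+2 colours. Let α and β be proper k-colourings of G. Suppose there is a recolouring sequence from the restriction of α to G−v to the restriction of β to G−v in which the vertices of N(v) are recoloured at most C times in total. Then this sequence lifts to a recolouring sequence in G from α to β in which v is recoloured at most ⌈C/(k−deg(v)−1)⌉ + 1 times. -/
set_option linter.unusedSectionVars false
set_option linter.unusedVariables false
set_option maxHeartbeats 1000000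


/-- A recolouring sequence in `G`: a list of proper `k`-colourings in which
consecutive colourings differ on exactly one vertex. -/
def RecolSeq {V : Type*} (G : SimpleGraph V) {k : ℕ} (L : List (V → Fin k)) : Prop :=
  (∀ c ∈ L, Proper G c) ∧ List.Chain' (fun c c' : V → Fin k => ∃! x, c x ≠ c' x) L

/-- The number of times the vertex `x` is recoloured along the sequence `L`. -/
def recolCount {V : Type*} {α : Type*} [DecidableEq α] (L : List (V → α)) (x : V) : ℕ :=
  (L.zip L.tail).countP fun p => decide (p.1 x ≠ p.2 x)

namespace Stmt1Aux

variable {V : Type*} [Fintype V] [DecidableEq V] (G : SimpleGraph V) [DecidableRel G.Adj]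
  (v : V) {k : ℕ}

abbrev S (v : V) : Set V := {u : V | u ≠ v}

def res (c : V → Fin k) : ↥(S v) → Fin k := fun u => c u

def ext (c' : ↥(S v) → Fin k) (a : Fin k) : V → Fin k :=
  fun w => if h : w = v then a else c' ⟨w, h⟩

@[simp] lemma ext_v (c' : ↥(S v) → Fin k) (a : Fin k) : ext v c' a v = a := dif_pos rfl

@[simp] lemma ext_coe (c' : ↥(S v) → Fin k) (a : Fin k) (u : ↥(S v)) :
    ext v c' a ↑u = c' u := by
  have h : (u : V) ≠ v := u.2
  simp only [ext, dif_neg h]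

@[simp] lemma res_ext (c' : ↥(S v) → Fin k) (a : Fin k) : res v (ext v c' a) = c' := by
  funext u; exact ext_coe v c' a u

lemma eq_ext (c : V → Fin k) : c = ext v (res v c) (c v) := by
  funext w
  by_cases h : w = v
  · subst h; simp [ext]
  · simp [ext, h, res]

def Ev (c₁ c₂ : ↥(S v) → Fin k) : Prop := ∃ u : ↥(S v), G.Adj v ↑u ∧ c₁ u ≠ c₂ u

def Kill (a : Fin k) (c₁ c₂ : ↥(S v) → Fin k) : Prop :=
  ∃ u : ↥(S v), G.Adj v ↑u ∧ c₁ u ≠ c₂ u ∧ c₂ u = a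

instance (c₁ c₂ : ↥(S v) → Fin k) : Decidable (Ev G v c₁ c₂) := by
  unfold Ev; infer_instance

instance (a : Fin k) (c₁ c₂ : ↥(S v) → Fin k) : Decidable (Kill G v a c₁ c₂) := by
  unfold Kill; infer_instance

def W : List (↥(S v) → Fin k) → ℕ
  | c₁ :: c₂ :: t => (if Ev G v c₁ c₂ then 1 else 0) + W (c₂ :: t)
  | _ => 0

def safeB (a : Fin k) : List (↥(S v) → Fin k) → ℕ → Bool
  | [], _ => true
  | [_], _ => true
  | c₁ :: c₂ :: t, n =>
      match n with
      | 0 => true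
      | n+1 =>
        (!decide (Kill G v a c₁ c₂)) && safeB a (c₂ :: t) (if Ev G v c₁ c₂ then n else n + 1)

/-- basic unfolding facts -/
lemma safeB_zero (a : Fin k) (L : List (↥(S v) → Fin k)) : safeB G v a L 0 = true := by
  cases L with
  | nil => rfl
  | cons c t => cases t <;> simp [safeB]

lemma safeB_succ (a : Fin k) (n : ℕ) (c₁ c₂ : ↥(S v) → Fin k) (t : List (↥(S v) → Fin k)) :
    safeB G v a (c₁ :: c₂ :: t) (n+1) =
      ((!decide (Kill G v a c₁ c₂)) &&
        safeB G v a (c₂ :: t) (if Ev G v c₁ c₂ then n else n + 1)) := by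
  simp [safeB]

lemma safeB_not_kill {a : Fin k} {n : ℕ} {c₁ c₂ : ↥(S v) → Fin k} {t : List (↥(S v) → Fin k)}
    (h : safeB G v a (c₁ :: c₂ :: t) (n+1) = true) : ¬ Kill G v a c₁ c₂ := by
  rw [safeB_succ] at h
  simp only [Bool.and_eq_true, Bool.not_eq_true', decide_eq_false_iff_not] at h
  exact h.1

lemma safeB_tail {a : Fin k} {n : ℕ} {c₁ c₂ : ↥(S v) → Fin k} {t : List (↥(S v) → Fin k)}
    (h : safeB G v a (c₁ :: c₂ :: t) n = true) (hnk : ¬ Kill G v a c₁ c₂) :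
    safeB G v a (c₂ :: t) (n - (if Ev G v c₁ c₂ then 1 else 0)) = true := by
  cases n with
  | zero => simpa using safeB_zero G v a (c₂ :: t)
  | succ m =>
    rw [safeB_succ] at h
    simp only [Bool.and_eq_true] at h
    by_cases he : Ev G v c₁ c₂
    · simpa [he] using h.2
    · simpa [he] using h.2

lemma recolCount_pair {α : Type*} [DecidableEq α] (c c' : V → α) (t : List (V → α)) (x : V) :
    recolCount (c :: c' :: t) x
      = recolCount (c' :: t) x + (if c x ≠ c' x then 1 else 0) := by
  simp [recolCount, List.countP_cons]

lemma recolCount_single {α : Type*} [DecidableEq α] (c : V → α) (x : V) :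
    recolCount [c] x = 0 := rfl

lemma W_le_sum : ∀ L : List (↥(S v) → Fin k),
    W G v L ≤ ∑ u : ↥(S v), if G.Adj v ↑u then recolCount L u else 0
  | [] => by simp [W]
  | [c] => by simp [W]
  | c₁ :: c₂ :: t => by
    have IH := W_le_sum (c₂ :: t)
    have hsum : ∀ u : ↥(S v),
        (if G.Adj v ↑u then recolCount (c₁ :: c₂ :: t) u else 0)
          = (if G.Adj v ↑u then recolCount (c₂ :: t) u else 0)
            + (if G.Adj v ↑u then (if c₁ u ≠ c₂ u then 1 else 0) else 0) := by
      intro u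
      by_cases h : G.Adj v ↑u <;> simp [h, recolCount_pair]
    rw [show (W G v (c₁ :: c₂ :: t))
        = (if Ev G v c₁ c₂ then 1 else 0) + W G v (c₂ :: t) from rfl]
    simp only [hsum, Finset.sum_add_distrib]
    have hev : (if Ev G v c₁ c₂ then 1 else 0)
        ≤ ∑ u : ↥(S v), (if G.Adj v ↑u then (if c₁ u ≠ c₂ u then 1 else 0) else 0) := by
      by_cases he : Ev G v c₁ c₂
      · rw [if_pos he]
        obtain ⟨u, hu, hne⟩ := he
        have : (1 : ℕ) = (if G.Adj v ↑u then (if c₁ u ≠ c₂ u then 1 else 0) else 0) := by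
          simp [hu, hne]
        exact this.le.trans (Finset.single_le_sum (f := fun u : ↥(S v) =>
          (if G.Adj v ↑u then (if c₁ u ≠ c₂ u then 1 else 0) else 0))
          (fun _ _ => Nat.zero_le _) (Finset.mem_univ u))
      · simp [he]
    omega


/-- At most `n` colours are unsafe at level `n`. -/
lemma card_unsafe : ∀ (L : List (↥(S v) → Fin k)) (n : ℕ),
    List.Chain' (fun c c' : ↥(S v) → Fin k => ∃! x, c x ≠ c' x) L →
    (Finset.univ.filter fun a : Fin k => safeB G v a L n = false).card ≤ n
  | [], n, _ => by simp [safeB]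
  | [c], n, _ => by simp [safeB]
  | c₁ :: c₂ :: t, 0, _ => by simp [safeB]
  | c₁ :: c₂ :: t, n+1, hch => by
    obtain ⟨hdf, hch'⟩ := List.isChain_cons_cons.mp hch
    obtain ⟨u₀, hu₀, huniq⟩ := hdf
    by_cases he : Ev G v c₁ c₂
    · have IH := card_unsafe (c₂ :: t) n hch'
      have hsub : (Finset.univ.filter fun a : Fin k => safeB G v a (c₁ :: c₂ :: t) (n+1) = false)
          ⊆ insert (c₂ u₀) (Finset.univ.filter fun a : Fin k => safeB G v a (c₂ :: t) n = false) := by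
        intro a ha
        simp only [Finset.mem_filter, Finset.mem_univ, true_and] at ha
        rw [safeB_succ] at ha
        simp only [he, if_true, Bool.and_eq_false_iff, Bool.not_eq_false',
          decide_eq_true_eq] at ha
        rcases ha with hkill | hsafe
        · obtain ⟨u, hu, hne, heq⟩ := hkill
          have : u = u₀ := huniq u hne
          subst this
          simp [← heq]
        · simp only [Finset.mem_insert, Finset.mem_filter, Finset.mem_univ, true_and]
          exact Or.inr hsafe
      calc _ ≤ (insert (c₂ u₀) (Finset.univ.filter
            fun a : Fin k => safeB G v a (c₂ :: t) n = false)).card := Finset.card_le_card hsub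
        _ ≤ _ + 1 := Finset.card_insert_le _ _
        _ ≤ n + 1 := by omega
    · have IH := card_unsafe (c₂ :: t) (n+1) hch'
      have hsub : (Finset.univ.filter fun a : Fin k => safeB G v a (c₁ :: c₂ :: t) (n+1) = false)
          ⊆ (Finset.univ.filter fun a : Fin k => safeB G v a (c₂ :: t) (n+1) = false) := by
        intro a ha
        simp only [Finset.mem_filter, Finset.mem_univ, true_and] at ha ⊢
        rw [safeB_succ] at ha
        simp only [he, if_false, Bool.and_eq_false_iff, Bool.not_eq_false',
          decide_eq_true_eq] at ha
        rcases ha with hkill | hsafe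
        · exact absurd ⟨hkill.choose, hkill.choose_spec.1, hkill.choose_spec.2.1⟩ he
        · exact hsafe
      exact (Finset.card_le_card hsub).trans IH

/-- extension of a proper colouring of `G - v` avoiding the neighbours' colours is proper. -/
lemma proper_ext {c' : ↥(S v) → Fin k} (hc' : Proper (G.induce (S v)) c') (a : Fin k)
    (ha : ∀ u : ↥(S v), G.Adj v ↑u → c' u ≠ a) : Proper G (ext v c' a) := by
  have key : ∀ y (hy : y ≠ v), G.Adj v y → ext v c' a v ≠ ext v c' a y := by
    intro y hy hadj
    rw [ext_v]
    intro h
    have h2 : c' ⟨y, hy⟩ = a := by simpa [ext, hy] using h.symm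
    exact ha ⟨y, hy⟩ hadj h2
  intro x y hxy
  by_cases hx : x = v
  · rw [hx]; rw [hx] at hxy
    exact key y (fun h => G.irrefl (h ▸ hxy)) hxy
  · by_cases hy : y = v
    · rw [hy]; rw [hy] at hxy
      exact (key x hx hxy.symm).symm
    · have : (G.induce (S v)).Adj ⟨x, hx⟩ ⟨y, hy⟩ := by
        simpa [SimpleGraph.induce] using hxy
      have := hc' this
      simpa [ext, hx, hy] using this

/-- step changing only `v`. -/
lemma step_at_v (c₁ : ↥(S v) → Fin k) {a a' : Fin k} (h : a ≠ a') :
    ∃! x, ext v c₁ a x ≠ ext v c₁ a' x := by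
  refine ⟨v, by simpa using h, fun y hy => ?_⟩
  by_contra hyv
  exact hy (by simp [ext, hyv])

/-- step changing only the unique vertex where `c₁` and `c₂` differ. -/
lemma step_ext {c₁ c₂ : ↥(S v) → Fin k} (hdf : ∃! u, c₁ u ≠ c₂ u) (a : Fin k) :
    ∃! x, ext v c₁ a x ≠ ext v c₂ a x := by
  obtain ⟨u₀, hu₀, huniq⟩ := hdf
  refine ⟨↑u₀, by simpa using hu₀, fun y hy => ?_⟩
  by_cases hyv : y = v
  · exact absurd (by simp [ext, hyv]) hy
  · have : c₁ ⟨y, hyv⟩ ≠ c₂ ⟨y, hyv⟩ := by simpa [ext, hyv] using hy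
    have := huniq _ this
    exact congrArg Subtype.val this

lemma c1_ne_c2 {c₁ c₂ : ↥(S v) → Fin k} (hdf : ∃! u, c₁ u ≠ c₂ u) : c₁ ≠ c₂ := by
  obtain ⟨u₀, hu₀, _⟩ := hdf
  exact fun h => hu₀ (congrFun h u₀)

lemma nbr_card :
    (Finset.univ.filter fun u : ↥(S v) => G.Adj v ↑u).card = (G.neighborSet v).ncard := by
  rw [Set.ncard_eq_toFinset_card']
  refine Finset.card_nbij (fun u => ↑u) ?_ ?_ ?_
  · intro u hu
    simp only [Finset.mem_coe, Finset.mem_filter] at hu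
    simp [SimpleGraph.mem_neighborSet, hu.2]
  · intro u hu u' hu' h
    exact Subtype.ext h
  · intro w hw
    have hw' : G.Adj v w := by simpa [SimpleGraph.mem_neighborSet] using hw
    exact ⟨⟨w, fun h => G.irrefl (h ▸ hw')⟩, by simp [hw'], rfl⟩


lemma exists_good_colour (hk : (G.neighborSet v).ncard + 2 ≤ k)
    (c₁ c₂ : ↥(S v) → Fin k) (u₀ : ↥(S v)) (huniq : ∀ u, c₁ u ≠ c₂ u → u = u₀)
    (t : List (↥(S v) → Fin k))
    (hch : List.Chain' (fun c c' : ↥(S v) → Fin k => ∃! x, c x ≠ c' x) (c₂ :: t)) :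
    ∃ a : Fin k, (∀ u : ↥(S v), G.Adj v ↑u → c₁ u ≠ a) ∧
      (∀ u : ↥(S v), G.Adj v ↑u → c₂ u ≠ a) ∧
      safeB G v a (c₂ :: t) (k - (G.neighborSet v).ncard - 2) = true ∧ a ≠ c₂ u₀ := by
  set d := (G.neighborSet v).ncard with hd
  set bad : Finset (Fin k) :=
    ((Finset.univ.filter fun u : ↥(S v) => G.Adj v ↑u).image c₁ ∪ {c₂ u₀}) ∪
      (Finset.univ.filter fun a : Fin k => safeB G v a (c₂ :: t) (k - d - 2) = false) with hbad
  have hcard : bad.card < k := by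
    have h1 : ((Finset.univ.filter fun u : ↥(S v) => G.Adj v ↑u).image c₁).card ≤ d := by
      refine (Finset.card_image_le).trans ?_
      rw [nbr_card G v]
    have h2 := card_unsafe G v (c₂ :: t) (k - d - 2) hch
    calc bad.card ≤ ((Finset.univ.filter fun u : ↥(S v) => G.Adj v ↑u).image c₁ ∪ {c₂ u₀}).card
          + (Finset.univ.filter fun a : Fin k =>
              safeB G v a (c₂ :: t) (k - d - 2) = false).card := Finset.card_union_le _ _
      _ ≤ (((Finset.univ.filter fun u : ↥(S v) => G.Adj v ↑u).image c₁).card + 1)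
          + (k - d - 2) := by
            have := Finset.card_union_le
              ((Finset.univ.filter fun u : ↥(S v) => G.Adj v ↑u).image c₁) ({c₂ u₀} : Finset (Fin k))
            simp only [Finset.card_singleton] at this
            omega
      _ < k := by omega
  have hnonempty : (badᶜ).Nonempty := by
    rw [← Finset.card_pos, Finset.card_compl, Fintype.card_fin]
    omega
  obtain ⟨a, ha⟩ := hnonempty
  rw [Finset.mem_compl] at ha
  rw [hbad] at ha
  simp only [Finset.mem_union, Finset.mem_image, Finset.mem_filter, Finset.mem_univ, true_and,
    Finset.mem_singleton, not_or, not_exists] at ha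
  obtain ⟨⟨himg, hsingle⟩, hunsafe⟩ := ha
  refine ⟨a, ?_, ?_, ?_, hsingle⟩
  · intro u hu h
    exact himg u (by simp [hu, h])
  · intro u hu h
    by_cases h12 : c₁ u = c₂ u
    · exact himg u (by simp [hu, h12, h])
    · exact hsingle (huniq u h12 ▸ h).symm
  · cases hs : safeB G v a (c₂ :: t) (k - d - 2) with
    | true => rfl
    | false => exact absurd hs hunsafe


lemma key (hk : (G.neighborSet v).ncard + 2 ≤ k) (b : Fin k) :
    ∀ (t : List (↥(S v) → Fin k)) (c₁ : ↥(S v) → Fin k) (c : V → Fin k) (n : ℕ),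
      RecolSeq (G.induce (S v)) (c₁ :: t) →
      Proper G c → res v c = c₁ →
      Proper G (ext v ((c₁ :: t).getLast (List.cons_ne_nil _ _)) b) →
      n + 1 ≤ k - (G.neighborSet v).ncard - 1 →
      safeB G v (c v) (c₁ :: t) n = true →
      ∃ L : List (V → Fin k), RecolSeq G L ∧ L.head? = some c ∧
        L.getLast? = some (ext v ((c₁ :: t).getLast (List.cons_ne_nil _ _)) b) ∧
        (L.map (res v)).destutter (· ≠ ·) = c₁ :: t ∧
        (k - (G.neighborSet v).ncard - 1) * recolCount L v + n + 1
          ≤ W G v (c₁ :: t) + 2 * (k - (G.neighborSet v).ncard - 1) := by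
  intro t
  induction t with
  | nil =>
    intro c₁ c n hL hc hres hlastP hn hsafe
    have hgl : ([c₁] : List (↥(S v) → Fin k)).getLast (List.cons_ne_nil _ _) = c₁ := rfl
    rw [hgl] at hlastP ⊢
    by_cases hcb : c v = b
    · refine ⟨[c], ⟨by simpa using hc, List.isChain_singleton c⟩, rfl, ?_, ?_, ?_⟩
      · have : ext v c₁ b = c := by
          rw [← hres, ← hcb]
          exact (eq_ext v c).symm
        simp [this]
      · simp [hres]
      · simp only [recolCount_single, W]
        omega
    · refine ⟨[c, ext v c₁ b], ⟨?_, ?_⟩, rfl, ?_, ?_, ?_⟩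
      · intro x hx
        rcases List.mem_cons.mp hx with h | h
        · exact h ▸ hc
        · simp only [List.mem_singleton] at h
          exact h ▸ hlastP
      · rw [List.Chain', List.isChain_pair]
        have hc_eq : c = ext v c₁ (c v) := by rw [← hres]; exact eq_ext v c
        rw [hc_eq]
        exact step_at_v v c₁ hcb
      · rfl
      · simp only [List.map_cons, List.map_nil, res_ext, hres, List.destutter_pair]
        simp
      · have h1 : recolCount [c, ext v c₁ b] v = 1 := by
          rw [recolCount_pair, recolCount_single]
          simp [hcb]
        rw [h1]
        simp only [W]
        omega
  | cons c₂ t' IH =>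
    intro c₁ c n hL hc hres hlastP hn hsafe
    obtain ⟨hprop, hch⟩ := hL
    obtain ⟨hdf, hch'⟩ := List.isChain_cons_cons.mp hch
    have hLtail : RecolSeq (G.induce (S v)) (c₂ :: t') :=
      ⟨fun x hx => hprop x (List.mem_cons_of_mem _ hx), hch'⟩
    have hgl : ((c₁ :: c₂ :: t').getLast (List.cons_ne_nil _ _))
        = ((c₂ :: t').getLast (List.cons_ne_nil _ _)) := List.getLast_cons_cons
    rw [hgl] at hlastP ⊢
    have hc_eq : c = ext v c₁ (c v) := by rw [← hres]; exact eq_ext v c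
    have hc1c2 : c₁ ≠ c₂ := c1_ne_c2 v hdf
    by_cases hkill : Kill G v (c v) c₁ c₂
    · -- case B : the step would conflict with the colour of v; recolour v first
      obtain ⟨u₀, hu₀adj, hu₀ne, hu₀eq⟩ := hkill
      have hEv : Ev G v c₁ c₂ := ⟨u₀, hu₀adj, hu₀ne⟩
      obtain ⟨w₀, hw₀, huniq₀⟩ := hdf
      have huniq : ∀ u, c₁ u ≠ c₂ u → u = u₀ := fun u h =>
        (huniq₀ u h).trans (huniq₀ u₀ hu₀ne).symm
      have hn0 : n = 0 := by
        cases n with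
        | zero => rfl
        | succ m => exact absurd ⟨u₀, hu₀adj, hu₀ne, hu₀eq⟩ (safeB_not_kill G v hsafe)
      obtain ⟨a, ha₁, ha₂, hsafea, hane⟩ :=
        exists_good_colour G v hk c₁ c₂ u₀ huniq t' hch'
      have hav : c v ≠ a := fun h => hane (h ▸ hu₀eq).symm
      have hpropmid : Proper G (ext v c₁ a) :=
        proper_ext G v (hprop c₁ (List.mem_cons_self)) a (fun u hu => ha₁ u hu)
      have hprop'' : Proper G (ext v c₂ a) :=
        proper_ext G v (hprop c₂ (List.mem_cons_of_mem _ (List.mem_cons_self))) a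
          (fun u hu => ha₂ u hu)
      have hsafe'' : safeB G v (ext v c₂ a v) (c₂ :: t')
          (k - (G.neighborSet v).ncard - 2) = true := by
        rw [ext_v]; exact hsafea
      have hn'' : (k - (G.neighborSet v).ncard - 2) + 1 ≤ k - (G.neighborSet v).ncard - 1 := by
        omega
      obtain ⟨Lr, hLr, hheadr, hlastr, hdestr, hboundr⟩ :=
        IH c₂ (ext v c₂ a) (k - (G.neighborSet v).ncard - 2) hLtail hprop''
          (res_ext v c₂ a) hlastP hn'' hsafe''
      cases Lr with
      | nil => simp at hheadr
      | cons y M =>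
        obtain rfl : y = ext v c₂ a := by simpa using hheadr
        refine ⟨c :: ext v c₁ a :: ext v c₂ a :: M, ⟨?_, ?_⟩, rfl, ?_, ?_, ?_⟩
        · intro x hx
          rcases List.mem_cons.mp hx with h | hx
          · exact h ▸ hc
          rcases List.mem_cons.mp hx with h | hx
          · exact h ▸ hpropmid
          · exact hLr.1 x hx
        · rw [List.Chain', List.isChain_cons_cons]
          constructor
          · rw [hc_eq]
            exact step_at_v v c₁ hav
          rw [List.isChain_cons_cons]
          exact ⟨step_ext v ⟨w₀, hw₀, huniq₀⟩ a, hLr.2⟩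
        · rw [List.getLast?_cons_cons, List.getLast?_cons_cons]
          exact hlastr
        · simp only [List.map_cons, res_ext, hres]
          rw [List.map_cons, res_ext] at hdestr
          rw [List.destutter_cons_cons, if_neg (by simp)]
          rw [show List.destutter' (· ≠ ·) c₁ (c₂ :: List.map (res v) M)
              = (c₁ :: c₂ :: List.map (res v) M).destutter (· ≠ ·) from rfl]
          rw [List.destutter_cons_cons, if_pos hc1c2]
          rw [show List.destutter' (· ≠ ·) c₂ (List.map (res v) M)
              = (c₂ :: List.map (res v) M).destutter (· ≠ ·) from rfl]
          rw [hdestr]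
        · have hrc : recolCount (c :: ext v c₁ a :: ext v c₂ a :: M) v
              = recolCount (ext v c₂ a :: M) v + 1 := by
            rw [recolCount_pair, recolCount_pair]
            simp [hav]
          rw [hrc, hn0]
          have hW : W G v (c₁ :: c₂ :: t') = 1 + W G v (c₂ :: t') := by
            simp only [W, hEv, if_true]
          rw [hW]
          have hq : 2 ≤ k - (G.neighborSet v).ncard := by omega
          set q := k - (G.neighborSet v).ncard - 1 with hqdef
          have hq1 : 1 ≤ q := by omega
          have : k - (G.neighborSet v).ncard - 2 = q - 1 := by omega
          rw [this] at hboundr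
          rw [Nat.mul_add, Nat.mul_one]
          generalize q * recolCount (ext v c₂ a :: M) v = X at hboundr ⊢
          omega
    · -- case A : keep the colour of v
      have ha : ∀ u : ↥(S v), G.Adj v ↑u → c₂ u ≠ c v := by
        intro u hu h
        by_cases h12 : c₁ u = c₂ u
        · have : c ↑u = c₁ u := by rw [← hres]; rfl
          exact hc hu (by rw [this, h12, h])
        · exact hkill ⟨u, hu, h12, h⟩
      have hprop' : Proper G (ext v c₂ (c v)) :=
        proper_ext G v (hprop c₂ (List.mem_cons_of_mem _ (List.mem_cons_self))) (c v) ha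
      have hsafe' : safeB G v (ext v c₂ (c v) v) (c₂ :: t')
          (n - (if Ev G v c₁ c₂ then 1 else 0)) = true := by
        rw [ext_v]
        exact safeB_tail G v hsafe hkill
      have hn' : (n - (if Ev G v c₁ c₂ then 1 else 0)) + 1
          ≤ k - (G.neighborSet v).ncard - 1 := by
        by_cases he : Ev G v c₁ c₂ <;> simp [he] <;> omega
      obtain ⟨Lr, hLr, hheadr, hlastr, hdestr, hboundr⟩ :=
        IH c₂ (ext v c₂ (c v)) (n - (if Ev G v c₁ c₂ then 1 else 0)) hLtail hprop'
          (res_ext v c₂ (c v)) hlastP hn' hsafe'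
      cases Lr with
      | nil => simp at hheadr
      | cons y M =>
        obtain rfl : y = ext v c₂ (c v) := by simpa using hheadr
        refine ⟨c :: ext v c₂ (c v) :: M, ⟨?_, ?_⟩, rfl, ?_, ?_, ?_⟩
        · intro x hx
          rcases List.mem_cons.mp hx with h | hx
          · exact h ▸ hc
          · exact hLr.1 x hx
        · rw [List.Chain', List.isChain_cons_cons]
          have hstep := step_ext v hdf (c v)
          rw [← hc_eq] at hstep
          exact ⟨hstep, hLr.2⟩
        · rw [List.getLast?_cons_cons]
          exact hlastr
        · simp only [List.map_cons, res_ext, hres]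
          rw [List.map_cons, res_ext] at hdestr
          rw [List.destutter_cons_cons, if_pos hc1c2]
          rw [show List.destutter' (· ≠ ·) c₂ (List.map (res v) M)
              = (c₂ :: List.map (res v) M).destutter (· ≠ ·) from rfl]
          rw [hdestr]
        · have hrc : recolCount (c :: ext v c₂ (c v) :: M) v
              = recolCount (ext v c₂ (c v) :: M) v := by
            rw [recolCount_pair]
            simp
          rw [hrc]
          have hW : W G v (c₁ :: c₂ :: t')
              = (if Ev G v c₁ c₂ then 1 else 0) + W G v (c₂ :: t') := rfl
          rw [hW]
          by_cases he : Ev G v c₁ c₂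
          · simp only [he, if_true] at hboundr ⊢
            omega
          · simp only [he, if_false] at hboundr ⊢
            omega

end Stmt1Aux

open Stmt1Aux in
/-- The lifting lemma: if `k ≥ deg(v) + 2` and a recolouring sequence from
`α` to `β` restricted to `G - v` recolours the neighbours of `v` at most `C` times
in total, then it lifts to a recolouring sequence in `G` from `α` to `β` in which
`v` is recoloured at most `⌈C/(k - deg v - 1)⌉ + 1` times. -/
theorem stmt1 {V : Type*} [Fintype V] [DecidableEq V] (G : SimpleGraph V)
    [DecidableRel G.Adj] (v : V)
    (k C : ℕ) (hk : (G.neighborSet v).ncard + 2 ≤ k)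
    (α β : V → Fin k) (hα : Proper G α) (hβ : Proper G β)
    (L' : List (↥{u : V | u ≠ v} → Fin k))
    (hL' : RecolSeq (G.induce {u : V | u ≠ v}) L')
    (hhead : L'.head? = some fun u : ↥{u : V | u ≠ v} => α u)
    (hlast : L'.getLast? = some fun u : ↥{u : V | u ≠ v} => β u)
    (hC : (∑ u : ↥{u : V | u ≠ v},
        if G.Adj v u then recolCount L' u else 0) ≤ C) :
    ∃ L : List (V → Fin k), RecolSeq G L ∧
      L.head? = some α ∧ L.getLast? = some β ∧
      (L.map fun c => fun u : ↥{u : V | u ≠ v} => c u).destutter (· ≠ ·) = L' ∧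
      recolCount L v ≤
        (C + (k - (G.neighborSet v).ncard - 1) - 1) / (k - (G.neighborSet v).ncard - 1)
          + 1 := by
  cases L' with
  | nil => simp at hhead
  | cons c₁ t =>
    have hc₁ : c₁ = res v α := by simp at hhead; exact hhead
    have hglast : (c₁ :: t).getLast (List.cons_ne_nil _ _) = res v β := by
      have := List.getLast?_eq_getLast (l := c₁ :: t) (List.cons_ne_nil _ _)
      rw [this] at hlast
      exact Option.some.inj hlast
    have hβext : ext v ((c₁ :: t).getLast (List.cons_ne_nil _ _)) (β v) = β := by
      rw [hglast]
      exact (eq_ext v β).symm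
    have hlastP : Proper G (ext v ((c₁ :: t).getLast (List.cons_ne_nil _ _)) (β v)) := by
      rw [hβext]; exact hβ
    have hn : 0 + 1 ≤ k - (G.neighborSet v).ncard - 1 := by omega
    obtain ⟨L, hRS, hhd, hlst, hdest, hbound⟩ :=
      key G v hk (β v) t c₁ α 0 hL' hα hc₁.symm hlastP hn (safeB_zero G v (α v) _)
    refine ⟨L, hRS, hhd, ?_, hdest, ?_⟩
    · rw [hlst, hβext]
    · have hWC : W G v (c₁ :: t) ≤ C := (W_le_sum G v (c₁ :: t)).trans hC
      set q := k - (G.neighborSet v).ncard - 1 with hq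
      have hq1 : 0 < q := by omega
      have h1 : q * recolCount L v ≤ C + q - 1 + q := by
        generalize q * recolCount L v = X at hbound ⊢
        omega
      have h2 : recolCount L v ≤ (C + q - 1 + q) / q := by
        rw [Nat.le_div_iff_mul_le hq1, mul_comm]
        exact h1
      have h3 : (C + q - 1 + q) / q = (C + q - 1) / q + 1 := Nat.add_div_right _ hq1
      rw [h3] at h2
      exact h2
end

section
/- If G is a graph with a vertex v of degree at most k−2, and the k-recolouring graph of G−v is connected, then the k-recolouring graph of G is connected. -/
/-- If `v` has degree at most `k - 2` and the `k`-recolouring graph of `G - v` is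
connected, then the `k`-recolouring graph of `G` is connected. -/
theorem stmt2 {V : Type*} [Fintype V] (G : SimpleGraph V) (v : V) (k : ℕ)
    (hdeg : (G.neighborSet v).ncard ≤ k - 2)
    (hconn : ∀ α' β' : ↥{u : V | u ≠ v} → Fin k,
      Proper (G.induce {u : V | u ≠ v}) α' → Proper (G.induce {u : V | u ≠ v}) β' →
      Reach (G.induce {u : V | u ≠ v}) α' β') :
    ∀ α β : V → Fin k, Proper G α → Proper G β → Reach G α β := by
  classical
  intro α β hα hβ
  by_cases hk2 : k < 2
  · interval_cases k
    · exact (α v).elim0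
    · have h : α = β := funext fun u => Subsingleton.elim _ _
      rw [h]
      exact Relation.ReflTransGen.refl
  push_neg at hk2
  -- restriction is proper on the induced graph
  have hres : ∀ c : V → Fin k, Proper G c →
      Proper (G.induce {u : V | u ≠ v}) (fun u => c u.val) := by
    intro c hc u w huw
    exact hc huw
  -- choosing a colour for v avoiding neighbours of v and one extra colour
  have hchoose : ∀ (c : V → Fin k) (t : Fin k), ∃ a : Fin k,
      (∀ u, G.Adj v u → a ≠ c u) ∧ a ≠ t := by
    intro c t
    have h1 : ((G.neighborSet v).toFinset.image c).card ≤ k - 2 := by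
      calc ((G.neighborSet v).toFinset.image c).card
          ≤ (G.neighborSet v).toFinset.card := Finset.card_image_le
        _ = (G.neighborSet v).ncard := (Set.ncard_eq_toFinset_card' _).symm
        _ ≤ k - 2 := hdeg
    have h2 := Finset.card_insert_le t ((G.neighborSet v).toFinset.image c)
    have hne : (insert t ((G.neighborSet v).toFinset.image c))ᶜ.Nonempty := by
      rw [← Finset.card_pos, Finset.card_compl, Fintype.card_fin]
      omega
    obtain ⟨a, ha⟩ := hne
    rw [Finset.mem_compl, Finset.mem_insert] at ha
    push_neg at ha
    refine ⟨a, fun u hu h => ?_, ha.1⟩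
    exact ha.2 (Finset.mem_image.2 ⟨u, Set.mem_toFinset.2 hu, h.symm⟩)
  -- lifting lemma
  have lift : ∀ c' d' : ↥{u : V | u ≠ v} → Fin k, Reach (G.induce {u : V | u ≠ v}) c' d' →
      ∀ c : V → Fin k, Proper G c → (fun u : ↥{u : V | u ≠ v} => c u.val) = c' →
      ∃ d, Proper G d ∧ (fun u : ↥{u : V | u ≠ v} => d u.val) = d' ∧ Reach G c d := by
    intro c' d' h
    induction h with
    | refl => intro c hc hcc; exact ⟨c, hc, hcc, Relation.ReflTransGen.refl⟩
    | @tail e' d' h hlast ih =>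
      intro c hc hcc
      obtain ⟨d, hd, hdd, hreach⟩ := ih c hc hcc
      obtain ⟨hp1, hp2, x, hx, hxu⟩ := hlast
      obtain ⟨a, ha1, ha2⟩ := hchoose d (d' x)
      have hxv : (x : V) ≠ v := x.2
      have hde : ∀ u : ↥{u : V | u ≠ v}, d u.val = e' u := fun u => congrFun hdd u
      set d₁ := Function.update d v a with hd₁def
      have hd₁v : d₁ v = a := Function.update_self v a d
      have hd₁u : ∀ u, u ≠ v → d₁ u = d u := fun u hu => Function.update_of_ne hu a d
      have hd₁ : Proper G d₁ := by
        have key : ∀ w, G.Adj v w → d₁ v ≠ d₁ w := by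
          intro w huw
          have hwv : w ≠ v := fun h => G.loopless.irrefl v (h ▸ huw)
          rw [hd₁v, hd₁u w hwv]
          exact ha1 w huw
        intro u w huw
        by_cases hu : u = v
        · rw [hu]; exact key w (hu ▸ huw)
        · by_cases hw : w = v
          · rw [hw]; exact (key u (hw ▸ huw.symm)).symm
          · rw [hd₁u u hu, hd₁u w hw]; exact hd huw
      have hstep1 : Reach G d d₁ := by
        by_cases hav : a = d v
        · have : d₁ = d := by rw [hd₁def, hav, Function.update_eq_self]
          rw [this]
          exact Relation.ReflTransGen.refl
        · refine Relation.ReflTransGen.single ⟨hd, hd₁, v, ?_, ?_⟩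
          · show d v ≠ d₁ v
            rw [hd₁v]; exact fun h => hav h.symm
          · intro y hy
            by_contra hyv
            exact hy (hd₁u y hyv).symm
      set d₂ := Function.update d₁ x.val (d' x) with hd₂def
      have hd₂x : d₂ x.val = d' x := Function.update_self _ _ _
      have hd₂u : ∀ u, u ≠ x.val → d₂ u = d₁ u := fun u hu => Function.update_of_ne hu _ _
      have hd₂v : d₂ v = a := by rw [hd₂u v (Ne.symm hxv), hd₁v]
      have hd₂o : ∀ u, u ≠ v → u ≠ x.val → d₂ u = d u := by
        intro u h1 h2; rw [hd₂u u h2, hd₁u u h1]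
      have hed : ∀ u : ↥{u : V | u ≠ v}, u ≠ x → e' u = d' u := by
        intro u hu
        by_contra h
        exact hu (hxu u h)
      have hd₂ : Proper G d₂ := by
        have key : ∀ w, G.Adj (x : V) w → d₂ (x : V) ≠ d₂ w := by
          intro w huw
          have hwx : w ≠ (x : V) := fun h => G.loopless.irrefl _ (h ▸ huw)
          rw [hd₂x]
          by_cases hwv : w = v
          · rw [hwv, hd₂v]
            exact fun h => ha2 h.symm
          · rw [hd₂o w hwv hwx]
            have hadj : (G.induce {u : V | u ≠ v}).Adj x ⟨w, hwv⟩ := huw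
            have h2 := hp2 hadj
            rw [← hed ⟨w, hwv⟩ (fun h => hwx (congrArg Subtype.val h))] at h2
            rw [hde ⟨w, hwv⟩]
            exact h2
        intro u w huw
        by_cases hu : u = (x : V)
        · rw [hu]; exact key w (hu ▸ huw)
        · by_cases hw : w = (x : V)
          · rw [hw]; exact (key u (hw ▸ huw.symm)).symm
          · rw [hd₂u u hu, hd₂u w hw]; exact hd₁ huw
      have hstep2 : Step G d₁ d₂ := by
        refine ⟨hd₁, hd₂, x.val, ?_, ?_⟩
        · show d₁ (x : V) ≠ d₂ (x : V)
          rw [hd₂x, hd₁u x.val hxv, hde x]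
          exact hx
        · intro y hy
          by_contra hyx
          exact hy (hd₂u y hyx).symm
      refine ⟨d₂, hd₂, ?_, hreach.trans (hstep1.tail hstep2)⟩
      funext u
      by_cases hux : u = x
      · rw [hux]; exact hd₂x
      · have : (u : V) ≠ (x : V) := fun h => hux (Subtype.ext h)
        rw [hd₂o u.val u.2 this, hde u, hed u hux]
  obtain ⟨d, hd, hdd, hreach⟩ :=
    lift _ _ (hconn _ _ (hres α hα) (hres β hβ)) α hα rfl
  by_cases hdb : d = β
  · rw [← hdb]; exact hreach
  · refine hreach.tail ⟨hd, hβ, v, ?_, ?_⟩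
    · intro h
      apply hdb
      funext u
      by_cases hu : u = v
      · rw [hu]; exact h
      · exact congrFun hdd ⟨u, hu⟩
    · intro y hy
      by_contra hyv
      exact hy (congrFun hdd ⟨y, hyv⟩)
end

section
/- Let G be a graph, φ a proper 4-colouring of G, and P = v₁v₂⋯v_k a path in G such that v₁ is φ-free and, for each i ∈ {2,…,k}, the vertex v_i is φ-locked and has degree 3 in G. Then for each j ∈ {2,…,k} there is a sequence of single-vertex recolourings starting from φ, recolouring only vertices of P, that results in a proper 4-colouring in which v_j is free. -/
/-- `v` is locked under `φ`: every colour appears on the closed neighbourhood of `v`. -/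
def Locked {V : Type*} (G : SimpleGraph V) {k : ℕ} (φ : V → Fin k) (v : V) : Prop :=
  ∀ c : Fin k, ∃ x, (x = v ∨ G.Adj v x) ∧ φ x = c

section Aux

variable {V : Type*} (G : SimpleGraph V)

lemma free_iff {k : ℕ} (ψ : V → Fin k) (v : V) :
    ¬ Locked G ψ v ↔ ∃ c, ∀ x, (x = v ∨ G.Adj v x) → ψ x ≠ c := by
  simp only [Locked, not_forall, not_exists, not_and]

/-- Key lemma: if `u` is locked under `ψ` and has degree 3, then recolouring any
neighbour `v` of `u` to any colour different from `ψ v` frees `u`. -/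
lemma unlock [DecidableEq V] (ψ : V → Fin 4) {u v : V} (hadj : G.Adj u v)
    (hdeg : (G.neighborSet u).ncard = 3) (hlock : Locked G ψ u)
    {c : Fin 4} (hc : c ≠ ψ v) : ¬ Locked G (Function.update ψ v c) u := by
  intro hlock'
  obtain ⟨x, hx, hxc⟩ := hlock' (ψ v)
  have hxv : x ≠ v := by
    rintro rfl
    rw [Function.update_self] at hxc
    exact hc hxc
  rw [Function.update_of_ne hxv] at hxc
  have hfin : (G.neighborSet u).Finite := by
    by_contra h
    rw [Set.Infinite.ncard h] at hdeg
    simp at hdeg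
  set S : Set V := insert u (G.neighborSet u) with hS
  have hSfin : S.Finite := hfin.insert u
  have hScard : S.ncard = 4 := by
    rw [hS, Set.ncard_insert_of_notMem (by simp) hfin, hdeg]
  have himg : ψ '' S = Set.univ := by
    apply Set.eq_univ_of_forall
    intro d
    obtain ⟨y, hy, hyd⟩ := hlock d
    refine ⟨y, ?_, hyd⟩
    rcases hy with h | h
    · exact h ▸ Set.mem_insert _ _
    · exact Set.mem_insert_of_mem _ h
  have hinj : Set.InjOn ψ S := by
    apply Set.injOn_of_ncard_image_eq _ hSfin
    rw [himg, hScard, Set.ncard_univ, Nat.card_eq_fintype_card, Fintype.card_fin]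
  have hxS : x ∈ S := by
    rcases hx with h | h
    · exact h ▸ Set.mem_insert _ _
    · exact Set.mem_insert_of_mem _ h
  have hvS : v ∈ S := Set.mem_insert_of_mem _ hadj
  exact hxv (hinj hxS hvS hxc)

lemma proper_update [DecidableEq V] {ψ : V → Fin 4} (hψ : Proper G ψ) {v : V} {c : Fin 4}
    (hc : ∀ x, G.Adj v x → ψ x ≠ c) : Proper G (Function.update ψ v c) := by
  intro a b hab
  rcases eq_or_ne a v with rfl | ha
  · rw [Function.update_self, Function.update_of_ne (G.ne_of_adj hab).symm]
    exact (hc b hab).symm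
  · rw [Function.update_of_ne ha]
    rcases eq_or_ne b v with rfl | hb
    · rw [Function.update_self]
      exact hc a hab.symm
    · rw [Function.update_of_ne hb]
      exact hψ hab

lemma main_ind [DecidableEq V] (φ : V → Fin 4) (hφ : Proper G φ)
    (l : List V) (hne : l ≠ []) (hpath : l.Chain' G.Adj)
    (hfree : ¬ Locked G φ (l.head hne))
    (hdeg : ∀ u ∈ l.tail, (G.neighborSet u).ncard = 3) :
    ∀ j (hj : j < l.length), ∃ L : List (V → Fin 4), RecolSeq G L ∧
      L.head? = some φ ∧ (∀ ψ ∈ L, ∀ x, x ∉ l → ψ x = φ x) ∧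
      ∃ ψ, L.getLast? = some ψ ∧ ¬ Locked G ψ (l.get ⟨j, hj⟩) := by
  intro j
  induction j with
  | zero =>
    intro hj
    refine ⟨[φ], ⟨by simpa using hφ, List.isChain_singleton _⟩, rfl, by simp, φ, rfl, ?_⟩
    have : l.get ⟨0, hj⟩ = l.head hne := by
      rw [List.head_eq_getElem_zero hne]
      rfl
    rw [this]
    exact hfree
  | succ j ih =>
    intro hj1
    have hj : j < l.length := Nat.lt_of_succ_lt hj1
    obtain ⟨L, ⟨hLprop, hLchain⟩, hhead, hsupp, ψ, hlast, hfreeψ⟩ := ih hj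
    have hLne : L ≠ [] := by
      rintro rfl
      simp at hhead
    set v := l.get ⟨j, hj⟩ with hv
    set u := l.get ⟨j + 1, hj1⟩ with hu
    have hadj : G.Adj v u := List.isChain_iff_getElem.mp hpath j (by omega)
    by_cases hlu : Locked G ψ u
    · -- extend the sequence by recolouring `v`
      have hψmem : ψ ∈ L := by
        obtain ⟨h, rfl⟩ := List.mem_getLast?_eq_getLast (Option.mem_def.mpr hlast)
        exact List.getLast_mem h
      have hψprop := hLprop ψ hψmem
      obtain ⟨c, hc⟩ := (free_iff G ψ v).mp hfreeψ
      have hcv : c ≠ ψ v := fun h => hc v (Or.inl rfl) h.symm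
      set ψ' := Function.update ψ v c with hψ'
      have hdegu : (G.neighborSet u).ncard = 3 := by
        apply hdeg
        have htl : j < l.tail.length := by
          rw [List.length_tail]; omega
        have := List.get_tail l j htl hj1
        rw [hu, ← this]
        exact List.get_mem _ _
      have hvmem : v ∈ l := List.get_mem _ _
      refine ⟨L ++ [ψ'], ⟨?_, ?_⟩, ?_, ?_, ψ', ?_, ?_⟩
      · intro d hd
        rcases List.mem_append.mp hd with h | h
        · exact hLprop d h
        · rw [List.mem_singleton.mp h]
          exact proper_update G hψprop (fun x hx => hc x (Or.inr hx))
      · rw [List.Chain', List.isChain_append]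
        refine ⟨hLchain, List.isChain_singleton _, ?_⟩
        intro x hx y hy
        rw [Option.mem_def, hlast, Option.some_inj] at hx
        simp only [List.head?_cons, Option.mem_def, Option.some_inj] at hy
        subst hx; subst hy
        refine ⟨v, ?_, ?_⟩
        · simp only [hψ', Function.update_self]
          exact hcv.symm
        · intro y hy
          by_contra hyv
          simp only [hψ', Function.update_of_ne hyv] at hy
          exact hy rfl
      · rw [List.head?_append_of_ne_nil _ hLne]
        exact hhead
      · intro d hd x hxl
        rcases List.mem_append.mp hd with h | h
        · exact hsupp d h x hxl
        · rw [List.mem_singleton.mp h, hψ',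
            Function.update_of_ne (show x ≠ v by rintro rfl; exact hxl hvmem)]
          exact hsupp ψ hψmem x hxl
      · exact List.getLast?_concat
      · exact unlock G ψ hadj.symm hdegu hlu hcv
    · exact ⟨L, ⟨hLprop, hLchain⟩, hhead, hsupp, ψ, hlast, hlu⟩

end Aux

/-- Let `P = v₁ v₂ ⋯ v_k` be a path (given as the list `l`) such that `v₁` is `φ`-free
and each later vertex is `φ`-locked of degree 3. Then each vertex `w` of the tail can
be unlocked by a recolouring sequence starting at `φ` that only recolours vertices
of the path. -/
theorem stmt4 {V : Type*} (G : SimpleGraph V) (φ : V → Fin 4) (hφ : Proper G φ)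
    (l : List V) (hne : l ≠ []) (hnodup : l.Nodup) (hpath : l.Chain' G.Adj)
    (hfree : ¬ Locked G φ (l.head hne))
    (hlocked : ∀ u ∈ l.tail, Locked G φ u ∧ (G.neighborSet u).ncard = 3) :
    ∀ w ∈ l.tail, ∃ L : List (V → Fin 4), RecolSeq G L ∧
      L.head? = some φ ∧
      (∀ ψ ∈ L, ∀ x, x ∉ l → ψ x = φ x) ∧
      ∃ ψ, L.getLast? = some ψ ∧ ¬ Locked G ψ w := by
  classical
  intro w hw
  obtain ⟨⟨i, hi⟩, hiw⟩ := List.mem_iff_get.mp hw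
  have hi1 : i + 1 < l.length := by
    rw [List.length_tail] at hi; omega
  have hwget : w = l.get ⟨i + 1, hi1⟩ := by
    rw [← hiw, List.get_tail l i hi hi1]
  obtain ⟨L, hrec, hhead, hsupp, ψ, hlast, hfr⟩ :=
    main_ind G φ hφ l hne hpath hfree (fun u hu => (hlocked u hu).2) (i + 1) hi1
  exact ⟨L, hrec, hhead, hsupp, ψ, hlast, hwget ▸ hfr⟩
end

section
/- Let G be a graph, φ a proper 4-colouring of G, and v a φ-frozen vertex of degree 3. Then every neighbour of v is φ-frozen. -/
/-- `v` is frozen under `φ`: every colouring reachable from `φ` by single-vertex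
recolourings gives `v` the colour `φ v`. -/
def Frozen {V : Type*} (G : SimpleGraph V) {k : ℕ} (φ : V → Fin k) (v : V) : Prop :=
  ∀ ψ : V → Fin k, Reach G φ ψ → ψ v = φ v

lemma reach_proper {V : Type*} {G : SimpleGraph V} {k : ℕ} {φ ψ : V → Fin k}
    (hφ : Proper G φ) (h : Reach G φ ψ) : Proper G ψ := by
  induction h with
  | refl => exact hφ
  | tail _ h2 _ => exact h2.2.1

/-- In any reachable colouring, every colour other than φ v appears on a neighbour of v. -/
lemma surj_nbrs {V : Type*} {G : SimpleGraph V} {φ : V → Fin 4} (hφ : Proper G φ)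
    {v : V} (hfrozen : Frozen G φ v) {ψ : V → Fin 4} (hr : Reach G φ ψ)
    {c : Fin 4} (hc : c ≠ φ v) : ∃ u, G.Adj v u ∧ ψ u = c := by
  classical
  by_contra hcon
  push_neg at hcon
  have hψp : Proper G ψ := reach_proper hφ hr
  have hψv : ψ v = φ v := hfrozen ψ hr
  have hne : ψ v ≠ c := by rw [hψv]; exact fun h => hc h.symm
  have hψ'p : Proper G (Function.update ψ v c) := by
    intro a b hab hval
    rcases eq_or_ne a v with ha | ha
    · have hb : b ≠ v := fun h => G.loopless.irrefl v (by rwa [ha, h] at hab)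
      rw [ha] at hval hab
      rw [Function.update_self, Function.update_of_ne hb] at hval
      exact hcon b hab hval.symm
    · rcases eq_or_ne b v with hb | hb
      · rw [hb] at hval hab
        rw [Function.update_self, Function.update_of_ne ha] at hval
        exact hcon a hab.symm hval
      · rw [Function.update_of_ne ha, Function.update_of_ne hb] at hval
        exact hψp hab hval
  have hstep : Step G ψ (Function.update ψ v c) := by
    refine ⟨hψp, hψ'p, v, ?_, ?_⟩
    · simp only [Function.update_self]; exact hne
    · intro x hx
      by_contra hxv
      rw [Function.update_of_ne hxv] at hx
      exact hx rfl
  have := hfrozen _ (hr.tail hstep)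
  rw [Function.update_self] at this
  exact hc this

/-- In any reachable colouring, ψ is injective on the neighbours of v. -/
lemma inj_nbrs {V : Type*} {G : SimpleGraph V} {φ : V → Fin 4} (hφ : Proper G φ)
    {v : V} (hdeg : (G.neighborSet v).ncard = 3) (hfrozen : Frozen G φ v)
    {ψ : V → Fin 4} (hr : Reach G φ ψ) :
    Set.InjOn ψ (G.neighborSet v) := by
  have hψp : Proper G ψ := reach_proper hφ hr
  have hfin : (G.neighborSet v).Finite := by
    by_contra h
    have h2 : (G.neighborSet v).Infinite := h
    rw [h2.ncard] at hdeg
    exact absurd hdeg (by norm_num)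
  have hψv : ψ v = φ v := hfrozen ψ hr
  set s := hfin.toFinset with hs
  have hscard : s.card = 3 := by
    rw [hs, ← Set.ncard_eq_toFinset_card _ hfin]; exact hdeg
  have hsub : Finset.univ.erase (φ v) ⊆ s.image ψ := by
    intro c hcmem
    have hc : c ≠ φ v := Finset.ne_of_mem_erase hcmem
    obtain ⟨u, hu, huc⟩ := surj_nbrs hφ hfrozen hr hc
    exact Finset.mem_image.mpr ⟨u, by simp [hs, hu], huc⟩
  have himcard : s.card ≤ (s.image ψ).card := by
    calc s.card = 3 := hscard
      _ = (Finset.univ.erase (φ v)).card := by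
            rw [Finset.card_erase_of_mem (Finset.mem_univ _)]; simp
      _ ≤ (s.image ψ).card := Finset.card_le_card hsub
  have hinj : Set.InjOn ψ s := Finset.injOn_of_card_image_eq
    (le_antisymm Finset.card_image_le himcard)
  intro a ha b hb hab
  exact hinj (by simp [hs, ha]) (by simp [hs, hb]) hab


/-- If `v` is a frozen vertex of degree 3 under a proper 4-colouring `φ`, then every
neighbour of `v` is frozen. -/
theorem stmt5 {V : Type*} (G : SimpleGraph V) (φ : V → Fin 4) (hφ : Proper G φ)
    (v : V) (hdeg : (G.neighborSet v).ncard = 3) (hfrozen : Frozen G φ v) :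
    ∀ u, G.Adj v u → Frozen G φ u := by
  suffices H : ∀ ψ, Reach G φ ψ → ∀ w, G.Adj v w → ψ w = φ w by
    intro u hu ψ hr
    exact H ψ hr u hu
  intro ψ hr
  induction hr with
  | refl => intro w _; rfl
  | @tail ψ ψ' hr hstep ih =>
    intro w hw
    by_cases hch : ψ' w = ψ w
    · rw [hch]; exact ih w hw
    · exfalso
      obtain ⟨x, hx, hxu⟩ := hstep.2.2
      have hxw : w = x := hxu w (fun h => hch h.symm)
      subst hxw
      have hr' : Reach G φ ψ' := hr.tail hstep
      have hfw : φ w ≠ φ v := fun h => hφ hw h.symm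
      obtain ⟨u, hu, huc⟩ := surj_nbrs hφ hfrozen hr' hfw
      rcases eq_or_ne u w with rfl | hux
      · exact hch (huc.trans (ih u hu).symm)
      · have hu' : ψ' u = ψ u := by
          by_contra h
          exact hux (hxu u fun h2 => h h2.symm)
        have : φ u = φ w := by rw [← ih u hu, ← hu', huc]
        exact hux ((inj_nbrs hφ hdeg hfrozen Relation.ReflTransGen.refl) hu hw this)
end

section
/- Let G be a graph, φ a proper 4-colouring of G, and v a φ-frozen vertex of degree 4. If v has two φ-frozen neighbours u₁, u₂ with φ(u₁) = φ(u₂), then all four neighbours of v are φ-frozen. -/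
lemma exists_fin4 : ∀ x y z : Fin 4, ∃ a : Fin 4, a ≠ x ∧ a ≠ y ∧ a ≠ z := by decide

/-- If `v` is a frozen vertex of degree 4 under a proper 4-colouring `φ` and `v` has
two frozen neighbours with the same colour, then all neighbours of `v` are frozen. -/
theorem stmt6 {V : Type*} (G : SimpleGraph V) (φ : V → Fin 4) (hφ : Proper G φ)
    (v : V) (hdeg : (G.neighborSet v).ncard = 4) (hfrozen : Frozen G φ v)
    (u₁ u₂ : V) (hu₁ : G.Adj v u₁) (hu₂ : G.Adj v u₂) (hne : u₁ ≠ u₂)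
    (hf₁ : Frozen G φ u₁) (hf₂ : Frozen G φ u₂) (hcol : φ u₁ = φ u₂) :
    ∀ u, G.Adj v u → Frozen G φ u := by
  classical
  -- properness is preserved along reachability
  have hproper : ∀ ψ, Reach G φ ψ → Proper G ψ := by
    intro ψ h
    induction h with
    | refl => exact hφ
    | tail _ hstep _ => exact hstep.2.1
  -- the neighbourhood of v is finite
  have hfin : (G.neighborSet v).Finite := by
    by_contra h
    rw [Set.Infinite.ncard (by exact h)] at hdeg
    omega
  have hsub : ({u₁, u₂} : Set V) ⊆ G.neighborSet v := by
    intro x hx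
    rcases hx with rfl | hx
    · exact hu₁
    · simp only [Set.mem_singleton_iff] at hx; subst hx; exact hu₂
  have hdiff : ((G.neighborSet v) \ {u₁, u₂}).ncard = 2 := by
    rw [Set.ncard_diff hsub ((Set.finite_singleton u₂).insert u₁), hdeg, Set.ncard_pair hne]
  obtain ⟨w₁, w₂, hw, hset⟩ := Set.ncard_eq_two.mp hdiff
  have hw₁mem : w₁ ∈ (G.neighborSet v) \ {u₁, u₂} := by rw [hset]; simp
  have hw₂mem : w₂ ∈ (G.neighborSet v) \ {u₁, u₂} := by rw [hset]; simp
  have hw₁a : G.Adj v w₁ := hw₁mem.1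
  have hw₂a : G.Adj v w₂ := hw₂mem.1
  have hNeq : G.neighborSet v = {u₁, u₂, w₁, w₂} := by
    have h := Set.diff_union_of_subset hsub
    rw [hset] at h
    rw [← h]
    ext x
    simp only [Set.mem_union, Set.mem_insert_iff, Set.mem_singleton_iff]
    tauto
  have hmem : ∀ u, G.Adj v u → u = u₁ ∨ u = u₂ ∨ u = w₁ ∨ u = w₂ := by
    intro u h
    have : u ∈ G.neighborSet v := h
    rw [hNeq] at this
    simpa using this
  -- covering lemma: in every reachable colouring, neighbours of v cover all colours ≠ φ v
  have hcover : ∀ ψ, Reach G φ ψ → ∀ a : Fin 4, a ≠ φ v → ∃ u, G.Adj v u ∧ ψ u = a := by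
    intro ψ hr a ha
    by_contra hcon
    push_neg at hcon
    have hψv : ψ v = φ v := hfrozen ψ hr
    have hp : Proper G ψ := hproper ψ hr
    set ψ' := Function.update ψ v a with hψ'
    have hp' : Proper G ψ' := by
      intro x y hxy
      rcases eq_or_ne x v with hx | hx
      · have hxy' : G.Adj v y := hx ▸ hxy
        have hyv : y ≠ v := fun h => G.loopless.irrefl v (h ▸ hxy')
        rw [hψ', hx, Function.update_self, Function.update_of_ne hyv]
        exact fun h => hcon y hxy' h.symm
      · rw [hψ', Function.update_of_ne hx]
        rcases eq_or_ne y v with hy | hy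
        · rw [hy, Function.update_self]
          exact fun h => hcon x (hy ▸ hxy.symm) h
        · rw [Function.update_of_ne hy]; exact hp hxy
    have hstep : Step G ψ ψ' := by
      refine ⟨hp, hp', v, ?_, ?_⟩
      · show ψ v ≠ ψ' v
        rw [hψ', Function.update_self, hψv]
        exact fun h => ha h.symm
      · intro y hy
        have hy' : ψ y ≠ ψ' y := hy
        by_contra hyv
        rw [hψ', Function.update_of_ne hyv] at hy'
        exact hy' rfl
    have h := hfrozen ψ' (hr.tail hstep)
    rw [hψ', Function.update_self] at h
    exact ha h
  -- basic colour facts at φ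
  have hv1 : φ w₁ ≠ φ v := fun h => hφ hw₁a h.symm
  have hv2 : φ w₂ ≠ φ v := fun h => hφ hw₂a h.symm
  have h1 : φ w₁ ≠ φ u₁ := by
    intro heq
    obtain ⟨a, ha1, ha2, ha3⟩ := exists_fin4 (φ v) (φ u₁) (φ w₂)
    obtain ⟨u, hadj, hua⟩ := hcover φ Relation.ReflTransGen.refl a ha1
    rcases hmem u hadj with rfl | rfl | rfl | rfl
    · exact ha2 hua.symm
    · exact ha2 (hcol.trans hua).symm
    · exact ha2 (heq.symm.trans hua).symm
    · exact ha3 hua.symm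
  have h2 : φ w₂ ≠ φ u₁ := by
    intro heq
    obtain ⟨a, ha1, ha2, ha3⟩ := exists_fin4 (φ v) (φ u₁) (φ w₁)
    obtain ⟨u, hadj, hua⟩ := hcover φ Relation.ReflTransGen.refl a ha1
    rcases hmem u hadj with rfl | rfl | rfl | rfl
    · exact ha2 hua.symm
    · exact ha2 (hcol.trans hua).symm
    · exact ha3 hua.symm
    · exact ha2 (heq.symm.trans hua).symm
  have h3 : φ w₁ ≠ φ w₂ := by
    intro heq
    obtain ⟨a, ha1, ha2, ha3⟩ := exists_fin4 (φ v) (φ u₁) (φ w₁)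
    obtain ⟨u, hadj, hua⟩ := hcover φ Relation.ReflTransGen.refl a ha1
    rcases hmem u hadj with rfl | rfl | rfl | rfl
    · exact ha2 hua.symm
    · exact ha2 (hcol.trans hua).symm
    · exact ha3 hua.symm
    · exact ha3 (heq.trans hua).symm
  -- invariant: w₁ and w₂ never change colour
  have hinv : ∀ ψ, Reach G φ ψ → ψ w₁ = φ w₁ ∧ ψ w₂ = φ w₂ := by
    intro ψ hr
    induction hr with
    | refl => exact ⟨rfl, rfl⟩
    | @tail b c hab hstep ih =>
      obtain ⟨x, _, hxuniq⟩ := hstep.2.2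
      have hrc : Reach G φ c := hab.tail hstep
      have hc1 : c u₁ = φ u₁ := hf₁ c hrc
      have hc2 : c u₂ = φ u₂ := hf₂ c hrc
      have H1 : c w₁ = φ w₁ := by
        by_contra hne1
        have hx1 : w₁ = x := hxuniq w₁ (show b w₁ ≠ c w₁ by rw [ih.1]; exact fun h => hne1 h.symm)
        have hw₂eq : c w₂ = b w₂ := by
          by_contra h
          exact hw (hx1.trans (hxuniq w₂ (show b w₂ ≠ c w₂ from fun he => h he.symm)).symm)
        obtain ⟨u, hadj, hucol⟩ := hcover c hrc (φ w₁) hv1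
        rcases hmem u hadj with rfl | rfl | rfl | rfl
        · exact h1 (hc1.symm.trans hucol).symm
        · exact h1 (hcol.trans (hc2.symm.trans hucol)).symm
        · exact hne1 hucol
        · exact h3 ((ih.2.symm.trans (hw₂eq.symm.trans hucol))).symm
      have H2 : c w₂ = φ w₂ := by
        by_contra hne2
        have hx2 : w₂ = x := hxuniq w₂ (show b w₂ ≠ c w₂ by rw [ih.2]; exact fun h => hne2 h.symm)
        have hw₁eq : c w₁ = b w₁ := by
          by_contra h
          exact hw ((hxuniq w₁ (show b w₁ ≠ c w₁ from fun he => h he.symm)).trans hx2.symm)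
        obtain ⟨u, hadj, hucol⟩ := hcover c hrc (φ w₂) hv2
        rcases hmem u hadj with rfl | rfl | rfl | rfl
        · exact h2 (hc1.symm.trans hucol).symm
        · exact h2 (hcol.trans (hc2.symm.trans hucol)).symm
        · exact h3 (ih.1.symm.trans (hw₁eq.symm.trans hucol))
        · exact hne2 hucol
      exact ⟨H1, H2⟩
  intro u hu
  rcases hmem u hu with rfl | rfl | rfl | rfl
  · exact hf₁
  · exact hf₂
  · exact fun ψ hr => (hinv ψ hr).1
  · exact fun ψ hr => (hinv ψ hr).2
end

section
/- Let C₅ be the 5-cycle with vertices v₁,…,v₅ in cyclic order, each v_i additionally having one pendant neighbour w_i (so each v_i has degree 3 in this graph H). Then in any proper 4-colouring φ of H, some v_i is free, i.e., at most 3 colours appear on the closed neighbourhood of some v_i. -/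
/-- The graph `H`: a 5-cycle on vertices `inl 0, …, inl 4`, each cycle vertex `inl i`
having a pendant neighbour `inr i` (so each `inl i` has degree 3). -/
def H8 : SimpleGraph (Fin 5 ⊕ Fin 5) :=
  SimpleGraph.fromRel fun a b =>
    match a, b with
    | .inl i, .inl j => j = i + 1
    | .inl i, .inr j => i = j
    | _, _ => False

lemma cover3 (a b e : Fin 4) (h : ∀ c : Fin 4, c = a ∨ c = b ∨ c = e) : False := by
  revert h; revert a b e; decide

lemma fin5_aux : ∀ i j : Fin 5, i = j + 1 → j = i + 4 := by decide

lemma adj_inl (i : Fin 5) (x : Fin 5 ⊕ Fin 5) (h : H8.Adj (Sum.inl i) x) :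
    x = Sum.inl (i+1) ∨ x = Sum.inl (i+4) ∨ x = Sum.inr i := by
  cases x with
  | inl j =>
    rw [H8, SimpleGraph.fromRel_adj] at h
    rcases h with ⟨hne, h | h⟩
    · left; simp only [Sum.inl.injEq]; exact h
    · right; left; simp only [Sum.inl.injEq]; exact fin5_aux i j h
  | inr j =>
    rw [H8, SimpleGraph.fromRel_adj] at h
    rcases h with ⟨hne, h | h⟩
    · right; right; simp only [Sum.inr.injEq]; exact h.symm
    · exact absurd h (by simp)

lemma fin5_ne_succ : ∀ i : Fin 5, i ≠ i + 1 := by decide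

lemma adj_succ (i : Fin 5) : H8.Adj (Sum.inl i) (Sum.inl (i+1)) := by
  rw [H8, SimpleGraph.fromRel_adj]
  exact ⟨by simp only [ne_eq, Sum.inl.injEq]; exact fin5_ne_succ i, Or.inl rfl⟩

lemma locked_ne (φ : Fin 5 ⊕ Fin 5 → Fin 4) (i : Fin 5)
    (hL : Locked H8 φ (Sum.inl i))
    (heq : φ (Sum.inl (i+1)) = φ (Sum.inl (i+4))) : False := by
  apply cover3 (φ (Sum.inl i)) (φ (Sum.inl (i+1))) (φ (Sum.inr i))
  intro c
  obtain ⟨x, hx, hc⟩ := hL c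
  rcases hx with rfl | hadj
  · left; exact hc.symm
  · rcases adj_inl i x hadj with rfl | rfl | rfl
    · right; left; exact hc.symm
    · right; left; rw [← hc, heq]
    · right; right; exact hc.symm

lemma pigeon (a b c d e : Fin 4) (h01 : a ≠ b) (h12 : b ≠ c) (h23 : c ≠ d)
    (h34 : d ≠ e) (h40 : e ≠ a) (h02 : a ≠ c) (h13 : b ≠ d) (h24 : c ≠ e)
    (h30 : d ≠ a) (h41 : e ≠ b) : False := by
  have H : ∀ a b c d e : Fin 4, ¬(a ≠ b ∧ b ≠ c ∧ c ≠ d ∧ d ≠ e ∧ e ≠ a ∧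
      a ≠ c ∧ b ≠ d ∧ c ≠ e ∧ d ≠ a ∧ e ≠ b) := by decide
  exact H a b c d e ⟨h01, h12, h23, h34, h40, h02, h13, h24, h30, h41⟩

lemma final5 (c : Fin 5 → Fin 4)
    (h1 : ∀ i, c i ≠ c (i+1)) (h2 : ∀ i, c (i+1) ≠ c (i+4)) : False := by
  have e1 : (0:Fin 5)+1 = 1 := rfl
  have e2 : (1:Fin 5)+1 = 2 := rfl
  have e3 : (2:Fin 5)+1 = 3 := rfl
  have e4 : (3:Fin 5)+1 = 4 := rfl
  have e5 : (4:Fin 5)+1 = 0 := rfl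
  have f1 : (0:Fin 5)+4 = 4 := rfl
  have f2 : (1:Fin 5)+4 = 0 := rfl
  have f3 : (2:Fin 5)+4 = 1 := rfl
  have f4 : (3:Fin 5)+4 = 2 := rfl
  have f5 : (4:Fin 5)+4 = 3 := rfl
  refine pigeon (c 0) (c 1) (c 2) (c 3) (c 4) ?_ ?_ ?_ ?_ ?_ ?_ ?_ ?_ ?_ ?_
  · have := h1 0; rwa [e1] at this
  · have := h1 1; rwa [e2] at this
  · have := h1 2; rwa [e3] at this
  · have := h1 3; rwa [e4] at this
  · have := h1 4; rwa [e5] at this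
  · have := h2 1; rw [e2, f2] at this; exact this.symm
  · have := h2 2; rw [e3, f3] at this; exact this.symm
  · have := h2 3; rw [e4, f4] at this; exact this.symm
  · have := h2 4; rw [e5, f5] at this; exact this.symm
  · have := h2 0; rw [e1, f1] at this; exact this.symm

/-- In every proper 4-colouring of `H8`, some cycle vertex is free (not locked). -/
theorem stmt8 (φ : Fin 5 ⊕ Fin 5 → Fin 4) (hφ : Proper H8 φ) :
    ∃ i : Fin 5, ¬ Locked H8 φ (Sum.inl i) := by
  by_contra h
  push_neg at h
  exact final5 (fun i => φ (Sum.inl i)) (fun i => hφ (adj_succ i))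
    (fun i he => locked_ne φ i (h i) he)
end

section
/- There exists a planar graph G and a proper 6-colouring φ of G such that every vertex of G is φ-locked (all 6 colours appear on every closed neighbourhood), and hence φ is an isolated vertex of the 6-recolouring graph of G, so the 6-recolouring graph of planar graphs is not always connected. -/
/-- Topological planarity: the vertices can be placed at distinct points of the plane
and the edges drawn as simple arcs meeting only at common endpoints. -/
def IsPlanar {V : Type*} (G : SimpleGraph V) : Prop :=
  ∃ (pos : V → ℝ × ℝ) (curve : ∀ u w, G.Adj u w → ℝ → ℝ × ℝ),
    Function.Injective pos ∧
    (∀ u w (h : G.Adj u w), ContinuousOn (curve u w h) (Set.Icc 0 1)) ∧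
    (∀ u w (h : G.Adj u w), curve u w h 0 = pos u ∧ curve u w h 1 = pos w) ∧
    (∀ u w (h : G.Adj u w), Set.InjOn (curve u w h) (Set.Icc 0 1)) ∧
    (∀ u w (h : G.Adj u w), ∀ t ∈ Set.Ioo (0 : ℝ) 1, curve u w h t ∉ Set.range pos) ∧
    (∀ u w (h : G.Adj u w), ∀ u' w' (h' : G.Adj u' w'), s(u, w) ≠ s(u', w') →
      ∀ t ∈ Set.Ioo (0 : ℝ) 1, ∀ t' ∈ Set.Ioo (0 : ℝ) 1,
        curve u w h t ≠ curve u' w' h' t')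

namespace Frozen

def pts : Fin 12 → ℤ × ℤ :=
  ![(0, 0), (3300, 0), (1221, 3003), (1991, 737), (1422, 1546), (1090, 734),
    (1023, 1280), (1588, 452), (1912, 1280), (1635, 1095), (1348, 1083), (1538, 818)]

def edges : List (Fin 12 × Fin 12) :=
  [(0,1),(0,2),(0,5),(0,6),(0,7),(1,2),(1,3),(1,7),(1,8),(2,4),(2,6),(2,8),
   (3,7),(3,8),(3,9),(3,11),(4,6),(4,8),(4,9),(4,10),(5,6),(5,7),(5,10),(5,11),
   (6,10),(7,11),(8,9),(9,10),(9,11),(10,11)]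

def adj (u w : Fin 12) : Prop := (u, w) ∈ edges ∨ (w, u) ∈ edges

instance : DecidableRel adj := fun u w => inferInstanceAs (Decidable (_ ∨ _))

def G : SimpleGraph (Fin 12) where
  Adj := adj
  symm := ⟨fun u w h => (show ∀ u w, adj u w → adj w u by decide) u w h⟩
  loopless := ⟨fun v h => (show ∀ v, ¬ adj v v by decide) v h⟩

instance : DecidableRel G.Adj := fun u w => inferInstanceAs (Decidable (adj u w))

def φ : Fin 12 → Fin 6 := ![0, 1, 2, 3, 4, 5, 3, 4, 5, 0, 1, 2]

lemma properφ : Proper G φ := by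
  have : ∀ u w, adj u w → φ u ≠ φ w := by decide
  exact fun u w h => this u w h

lemma lockedφ : ∀ v, Locked G φ v := by
  have : ∀ (v : Fin 12) (c : Fin 6), ∃ x, (x = v ∨ adj v x) ∧ φ x = c := by decide
  exact this

/-- cross product of `b - a` with `p - a`, over the integers. -/
def cr (a b p : ℤ × ℤ) : ℤ := (b.1 - a.1) * (p.2 - a.2) - (b.2 - a.2) * (p.1 - a.1)

/-- cross product over the reals. -/
def crR (a b p : ℝ × ℝ) : ℝ := (b.1 - a.1) * (p.2 - a.2) - (b.2 - a.2) * (p.1 - a.1)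

def sep (a b c d : ℤ × ℤ) : Prop := 0 ≤ cr a b c * cr a b d ∧ (cr a b c ≠ 0 ∨ cr a b d ≠ 0)

instance (a b c d : ℤ × ℤ) : Decidable (sep a b c d) := inferInstanceAs (Decidable (_ ∧ _))

lemma C1 : ∀ u w, adj u w → ∀ x, x ≠ u → x ≠ w → cr (pts u) (pts w) (pts x) ≠ 0 := by
  decide

lemma C2 : ∀ u w, adj u w → ∀ u' w', adj u' w' →
    ¬((u = u' ∧ w = w') ∨ (u = w' ∧ w = u')) →
    sep (pts u) (pts w) (pts u') (pts w') ∨ sep (pts u') (pts w') (pts u) (pts w) := by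
  decide

lemma ptsInj : Function.Injective pts := by decide

noncomputable def pos (v : Fin 12) : ℝ × ℝ := (((pts v).1 : ℝ), ((pts v).2 : ℝ))

noncomputable def curve (u w : Fin 12) (_ : G.Adj u w) (t : ℝ) : ℝ × ℝ :=
  ((1 - t) * (pos u).1 + t * (pos w).1, (1 - t) * (pos u).2 + t * (pos w).2)

lemma crR_cast (a b p : Fin 12) :
    crR (pos a) (pos b) (pos p) = (cr (pts a) (pts b) (pts p) : ℤ) := by
  simp only [crR, cr, pos]
  push_cast
  ring

lemma crR_curve (a b : ℝ × ℝ) (c d : ℝ × ℝ) (t : ℝ) :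
    crR a b ((1 - t) * c.1 + t * d.1, (1 - t) * c.2 + t * d.2)
      = (1 - t) * crR a b c + t * crR a b d := by
  simp only [crR]; ring

lemma crR_self (a b : ℝ × ℝ) (t : ℝ) :
    crR a b ((1 - t) * a.1 + t * b.1, (1 - t) * a.2 + t * b.2) = 0 := by
  simp only [crR]; ring

lemma sep_ne {c d : ℤ} (h1 : 0 ≤ c * d) (h2 : c ≠ 0 ∨ d ≠ 0) {t : ℝ} (ht : 0 < t)
    (ht1 : t < 1) : (1 - t) * (c : ℝ) + t * (d : ℝ) ≠ 0 := by
  intro h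
  have h1' : (0 : ℝ) ≤ (c : ℝ) * (d : ℝ) := by exact_mod_cast h1
  have hcd : (c : ℝ) ≠ 0 ∨ (d : ℝ) ≠ 0 := by
    rcases h2 with h' | h'
    · exact Or.inl (by exact_mod_cast h')
    · exact Or.inr (by exact_mod_cast h')
  rcases hcd with hc | hd
  · have hcc : (0 : ℝ) < (c : ℝ) * c := mul_self_pos.2 hc
    have hh : (1 - t) * ((c : ℝ) * c) + t * ((c : ℝ) * d) = 0 := by linear_combination (c : ℝ) * h
    have := mul_pos (sub_pos.2 ht1) hcc
    have := mul_nonneg ht.le h1'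
    linarith
  · have hdd : (0 : ℝ) < (d : ℝ) * d := mul_self_pos.2 hd
    have hh : (1 - t) * ((c : ℝ) * d) + t * ((d : ℝ) * d) = 0 := by linear_combination (d : ℝ) * h
    have := mul_pos ht hdd
    have := mul_nonneg (sub_pos.2 ht1).le h1'
    linarith

lemma pos_ne {u w : Fin 12} (h : u ≠ w) : pos u ≠ pos w := by
  intro he
  apply h; apply ptsInj
  have h1 := congrArg Prod.fst he
  have h2 := congrArg Prod.snd he
  simp only [pos] at h1 h2
  exact Prod.ext (by exact_mod_cast h1) (by exact_mod_cast h2)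

lemma planarG : IsPlanar G := by
  refine ⟨pos, curve, ?_, ?_, ?_, ?_, ?_, ?_⟩
  · intro u w h
    by_contra hne
    exact pos_ne hne h
  · intro u w h
    apply ContinuousOn.prodMk <;> fun_prop
  · intro u w h
    constructor <;> simp [curve]
  · intro u w h t ht s hs he
    have hne : pos u ≠ pos w := pos_ne (G.ne_of_adj h)
    have h1 := congrArg Prod.fst he
    have h2 := congrArg Prod.snd he
    simp only [curve] at h1 h2
    have e1 : (t - s) * ((pos w).1 - (pos u).1) = 0 := by linarith
    have e2 : (t - s) * ((pos w).2 - (pos u).2) = 0 := by linarith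
    rcases mul_eq_zero.1 e1 with h' | h'
    · linarith
    · rcases mul_eq_zero.1 e2 with h'' | h''
      · linarith
      · exfalso; apply hne; apply Prod.ext <;> linarith
  · rintro u w h t ht ⟨x, hx⟩
    have h1 := congrArg Prod.fst hx.symm
    have h2 := congrArg Prod.snd hx.symm
    simp only [curve] at h1 h2
    by_cases hxu : x = u
    · subst hxu
      have hne : pos x ≠ pos w := pos_ne (G.ne_of_adj h)
      have e1 : t * ((pos w).1 - (pos x).1) = 0 := by linarith
      have e2 : t * ((pos w).2 - (pos x).2) = 0 := by linarith
      have ht0 : t ≠ 0 := ne_of_gt ht.1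
      apply hne; apply Prod.ext
      · have := (mul_eq_zero.1 e1).resolve_left ht0; linarith
      · have := (mul_eq_zero.1 e2).resolve_left ht0; linarith
    · by_cases hxw : x = w
      · subst hxw
        have hne : pos u ≠ pos x := pos_ne (G.ne_of_adj h)
        have e1 : (1 - t) * ((pos x).1 - (pos u).1) = 0 := by linarith
        have e2 : (1 - t) * ((pos x).2 - (pos u).2) = 0 := by linarith
        have ht0 : (1 : ℝ) - t ≠ 0 := by have := ht.2; intro hh; linarith
        apply hne; apply Prod.ext
        · have := (mul_eq_zero.1 e1).resolve_left ht0; linarith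
        · have := (mul_eq_zero.1 e2).resolve_left ht0; linarith
      · have hc := C1 u w h x hxu hxw
        have : crR (pos u) (pos w) (pos x) = 0 := by
          have : pos x = ((1 - t) * (pos u).1 + t * (pos w).1,
              (1 - t) * (pos u).2 + t * (pos w).2) := by
            apply Prod.ext <;> simp [h1, h2]
          rw [this, crR_self]
        rw [crR_cast] at this
        exact hc (by exact_mod_cast this)
  · intro u w h u' w' h' hs t ht t' ht' he
    have hne : ¬((u = u' ∧ w = w') ∨ (u = w' ∧ w = u')) := by
      intro hh; apply hs
      rcases hh with ⟨h1, h2⟩ | ⟨h1, h2⟩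
      · rw [h1, h2]
      · rw [h1, h2]; exact Sym2.eq_swap
    have key : ∀ (a b c d : Fin 12), sep (pts a) (pts b) (pts c) (pts d) →
        ∀ s : ℝ, 0 < s → s < 1 →
        crR (pos a) (pos b) ((1 - s) * (pos c).1 + s * (pos d).1,
          (1 - s) * (pos c).2 + s * (pos d).2) ≠ 0 := by
      intro a b c d ⟨hsep1, hsep2⟩ s hs0 hs1
      rw [crR_curve, crR_cast, crR_cast]
      exact sep_ne hsep1 hsep2 hs0 hs1
    simp only [curve] at he
    rcases C2 u w h u' w' h' hne with hsep | hsep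
    · have h1 := key u w u' w' hsep t' ht'.1 ht'.2
      rw [← he] at h1
      exact h1 (crR_self _ _ _)
    · have h1 := key u' w' u w hsep t ht.1 ht.2
      rw [he] at h1
      exact h1 (crR_self _ _ _)

lemma noStep : ∀ ψ : Fin 12 → Fin 6, ¬ Step G φ ψ := by
  rintro ψ ⟨hφ, hψ, x, hx, hux⟩
  have hlock := lockedφ x (ψ x)
  obtain ⟨z, hz, hzc⟩ := hlock
  rcases hz with rfl | hadj
  · exact hx hzc
  · have hzx : z ≠ x := fun hh => G.loopless.irrefl x (hh ▸ hadj)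
    have : φ z = ψ z := by
      by_contra hne
      exact hzx (hux z hne)
    rw [this] at hzc
    exact hψ (G.symm.symm _ _ hadj) (hzc.symm ▸ rfl)

theorem result :
    ∃ (V : Type) (_ : Fintype V) (G : SimpleGraph V) (φ : V → Fin 6),
      IsPlanar G ∧ Proper G φ ∧ (∀ v, Locked G φ v) ∧
      (∀ ψ : V → Fin 6, ¬ Step G φ ψ) ∧
      (∃ ψ : V → Fin 6, Proper G ψ ∧ ¬ Reach G φ ψ) := by
  refine ⟨Fin 12, inferInstance, G, φ, planarG, properφ, lockedφ, noStep, ?_⟩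
  refine ⟨fun v => φ v + 1, ?_, ?_⟩
  · intro u w h hc
    exact properφ h (by simpa using congrArg (· + (-1 : Fin 6)) hc)
  · intro hr
    rcases Relation.ReflTransGen.cases_head hr with heq | ⟨b, hstep, _⟩
    · have h0 : φ 0 = φ 0 + 1 := congrArg (· 0) heq
      exact absurd h0 (by decide)
    · exact noStep b hstep

end Frozen

/-- There is a planar graph `G` with a proper 6-colouring `φ` in which every vertex is
locked; hence `φ` admits no single recolouring step (it is an isolated vertex of the
6-recolouring graph), and the 6-recolouring graph of `G` is disconnected. -/


theorem stmt10 :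
    ∃ (V : Type) (_ : Fintype V) (G : SimpleGraph V) (φ : V → Fin 6),
      IsPlanar G ∧ Proper G φ ∧ (∀ v, Locked G φ v) ∧
      (∀ ψ : V → Fin 6, ¬ Step G φ ψ) ∧
      (∃ ψ : V → Fin 6, Proper G ψ ∧ ¬ Reach G φ ψ) :=
  Frozen.result
end

section
/- Let Q₃ be the 3-dimensional cube graph. There is a proper 4-colouring of Q₃ in which all 4 colours appear on every face (equivalently, every vertex is locked), and consequently the 4-recolouring graph of Q₃ is disconnected. -/
/-- The 3-dimensional cube graph `Q₃`: vertices `Fin 3 → Bool`, adjacent when they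
differ in exactly one coordinate. -/
def Q3 : SimpleGraph (Fin 3 → Bool) where
  Adj x y := ∃! i, x i ≠ y i
  symm := by
    constructor
    rintro x y ⟨i, hi, hu⟩
    exact ⟨i, hi.symm, fun j hj => hu j hj.symm⟩
  loopless := by constructor; rintro x ⟨i, hi, -⟩; exact hi rfl

/-- The locked colouring: `x ↦ (x₀ xor x₂) + 2·(x₁ xor x₂)`. -/
def myφ : (Fin 3 → Bool) → Fin 4 := fun x =>
  (if xor (x 0) (x 2) then 1 else 0) + (if xor (x 1) (x 2) then 2 else 0)

instance : DecidableRel Q3.Adj := fun x y => by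
  unfold Q3 ExistsUnique; dsimp only; infer_instance

lemma myφ_proper : Proper Q3 myφ := by unfold Proper myφ; decide

lemma myφ_locked : ∀ v, Locked Q3 myφ v := by unfold Locked myφ; decide

/-- A colouring all of whose vertices are locked admits no recolouring step. -/
lemma frozen {V : Type*} (G : SimpleGraph V) {k : ℕ} (φ : V → Fin k)
    (hL : ∀ v, Locked G φ v) (c' : V → Fin k) : ¬ Step G φ c' := by
  rintro ⟨hφ, hc', x, hx, hun⟩
  obtain ⟨y, hy, hyc⟩ := hL x (c' x)
  rcases hy with rfl | hadj
  · exact hx hyc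
  · have hyx : y ≠ x := fun h => G.loopless.irrefl x (h ▸ hadj)
    have : φ y = c' y := by
      by_contra h
      exact hyx (hun y h)
    exact hc' hadj (this ▸ hyc).symm

/-- There is a proper 4-colouring of the cube `Q₃` in which every vertex is locked
(all 4 colours appear on every closed neighbourhood); consequently the 4-recolouring
graph of `Q₃` is disconnected. -/
theorem stmt11 :
    ∃ φ : (Fin 3 → Bool) → Fin 4, Proper Q3 φ ∧ (∀ v, Locked Q3 φ v) ∧
      ∃ ψ : (Fin 3 → Bool) → Fin 4, Proper Q3 ψ ∧ ¬ Reach Q3 φ ψ := by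
  refine ⟨myφ, myφ_proper, myφ_locked, fun x => myφ x + 1, by unfold Proper myφ; decide, fun h => ?_⟩
  rcases h.cases_head with h | ⟨b, hb, -⟩
  · have := congrFun h (fun _ => false)
    revert this; unfold myφ; decide
  · exact frozen Q3 myφ myφ_locked b hb
end

section
/- Let C be a cycle whose length is a multiple of 3, at least 6. The proper 3-colouring of C that assigns colours 1,2,3 cyclically around the cycle has every vertex locked, so the 3-recolouring graph of C is disconnected. -/
/-- The cycle on `n` vertices, `n ≥ 3`, with vertex set `ZMod n` and `x` adjacent
to `x + 1`. -/
def Cyc (n : ℕ) [NeZero n] : SimpleGraph (ZMod n) :=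
  SimpleGraph.fromRel fun a b => b = a + 1

lemma val_succ_mod3 (n : ℕ) [NeZero n] (h6 : 6 ≤ n) (h3 : 3 ∣ n) (x : ZMod n) :
    (x + 1).val % 3 = (x.val + 1) % 3 := by
  haveI : Fact (1 < n) := ⟨by omega⟩
  rw [ZMod.val_add, ZMod.val_one, Nat.mod_mod_of_dvd _ h3]

/-- For a cycle whose length is a multiple of 3 and at least 6, the proper
3-colouring assigning `1,2,3` cyclically has every vertex locked, so the
3-recolouring graph of the cycle is disconnected. -/
theorem stmt12 (n : ℕ) [NeZero n] (h6 : 6 ≤ n) (h3 : 3 ∣ n) :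
    Proper (Cyc n) (fun x : ZMod n => (⟨x.val % 3, Nat.mod_lt _ (by omega)⟩ : Fin 3)) ∧
    (∀ v : ZMod n,
      Locked (Cyc n) (fun x : ZMod n => (⟨x.val % 3, Nat.mod_lt _ (by omega)⟩ : Fin 3)) v) ∧
    (∃ ψ : ZMod n → Fin 3, Proper (Cyc n) ψ ∧
      ¬ Reach (Cyc n) (fun x : ZMod n => (⟨x.val % 3, Nat.mod_lt _ (by omega)⟩ : Fin 3)) ψ) := by
  haveI : Fact (1 < n) := ⟨by omega⟩
  set φ : ZMod n → Fin 3 := fun x : ZMod n => (⟨x.val % 3, Nat.mod_lt _ (by omega)⟩ : Fin 3)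
    with hφ
  have hsucc : ∀ x : ZMod n, (φ (x + 1)).val = ((φ x).val + 1) % 3 := by
    intro x
    simp only [hφ]
    rw [val_succ_mod3 n h6 h3 x, Nat.add_mod x.val 1 3]
  have hne1 : (1 : ZMod n) ≠ 0 := one_ne_zero
  have hadj : ∀ x : ZMod n, (Cyc n).Adj x (x + 1) := by
    intro x
    refine ⟨(left_ne_add).mpr hne1, Or.inl rfl⟩
  have hadj' : ∀ x : ZMod n, (Cyc n).Adj x (x - 1) := by
    intro x
    refine ⟨?_, Or.inr (by ring)⟩
    rw [sub_eq_add_neg]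
    exact (left_ne_add).mpr (neg_ne_zero.mpr hne1)
  have hproper : Proper (Cyc n) φ := by
    intro u w huw
    rcases huw.2 with h | h
    · subst h
      intro hc
      have := hsucc u
      rw [← hc] at this
      omega
    · subst h
      intro hc
      have := hsucc w
      rw [hc] at this
      omega
  refine ⟨hproper, ?_, ?_⟩
  · intro v c
    have hv1 := hsucc v
    have hv2 : (φ v).val = ((φ (v - 1)).val + 1) % 3 := by
      have := hsucc (v - 1); simpa using this
    have h0 : (φ v).val < 3 := (φ v).isLt
    have h1 : (φ (v + 1)).val < 3 := (φ (v + 1)).isLt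
    have h2 : (φ (v - 1)).val < 3 := (φ (v - 1)).isLt
    have hc : c.val < 3 := c.isLt
    rcases show c.val = (φ v).val ∨ c.val = (φ (v + 1)).val ∨ c.val = (φ (v - 1)).val by
        omega with h | h | h
    · exact ⟨v, Or.inl rfl, Fin.ext h.symm⟩
    · exact ⟨v + 1, Or.inr (hadj v), Fin.ext h.symm⟩
    · exact ⟨v - 1, Or.inr (hadj' v), Fin.ext h.symm⟩
  · -- no step leaves φ
    have hnostep : ∀ c', ¬ Step (Cyc n) φ c' := by
      rintro c' ⟨-, hp', x, hx, huniq⟩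
      have heq : ∀ y, y ≠ x → c' y = φ y := by
        intro y hy
        by_contra h
        exact hy (huniq y (fun h' => h h'.symm))
      have hx1 : x + 1 ≠ x := fun h => hne1 (by linear_combination h)
      have hx2 : x - 1 ≠ x := fun h => hne1 (by linear_combination -h)
      have e1 : c' (x + 1) = φ (x + 1) := heq _ hx1
      have e2 : c' (x - 1) = φ (x - 1) := heq _ hx2
      have d1 : c' x ≠ c' (x + 1) := hp' (hadj x)
      have d2 : c' x ≠ c' (x - 1) := hp' (hadj' x)
      rw [e1] at d1; rw [e2] at d2
      have hv1 := hsucc x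
      have hv2 : (φ x).val = ((φ (x - 1)).val + 1) % 3 := by
        have := hsucc (x - 1); simpa using this
      have h0 : (φ x).val < 3 := (φ x).isLt
      have h1 : (φ (x + 1)).val < 3 := (φ (x + 1)).isLt
      have h2 : (φ (x - 1)).val < 3 := (φ (x - 1)).isLt
      have hc : (c' x).val < 3 := (c' x).isLt
      have n0 : (c' x).val ≠ (φ x).val := fun h => hx (Fin.ext h.symm)
      have n1 : (c' x).val ≠ (φ (x + 1)).val := fun h => d1 (Fin.ext h)
      have n2 : (c' x).val ≠ (φ (x - 1)).val := fun h => d2 (Fin.ext h)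
      omega
    refine ⟨fun x => φ (x + 1), fun u w huw => hproper ?_, ?_⟩
    · rcases huw with ⟨hne, h | h⟩
      · exact ⟨by simpa using hne, Or.inl (by rw [h])⟩
      · exact ⟨by simpa using hne, Or.inr (by rw [h])⟩
    · intro hreach
      rcases hreach.cases_head with h | ⟨c', hstep, -⟩
      · have := congrFun h 0
        simp only [hφ] at this
        have h01 : ((0 : ZMod n) + 1) = (1 : ZMod n) := by ring
        rw [h01] at this
        have h2 : (0 : ZMod n).val % 3 = (1 : ZMod n).val % 3 := congrArg Fin.val this
        rw [ZMod.val_one, ZMod.val_zero] at h2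
        omega
      · exact hnostep _ hstep
end
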